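/- arXiv:1402.6466 — 4 statements merged into one kernel-verified Lean document; each statement's English description precedes it below -/
import Mathlib

section
/- For every finite simple graph G on n vertices with at least one edge, τ(G) ≤ n − β(G) + 1. -/
open MeasureTheory ProbabilityTheory Filter Real

namespace RandomBipartiteDecomposition

/-- The set of edges of the complete bipartite graph with vertex classes `A` and `B`. -/
def bicliqueEdges {V : Type*} (A B : Finset V) : Set (Sym2 V) :=
  {e | ∃ a ∈ A, ∃ b ∈ B, e = s(a, b)}

/-- `A`, `B` are the vertex classes of a complete bipartite subgraph of `G`. -/
def IsBicliqueIn {V : Type*} (G : SimpleGraph V) (A B : Finset V) : Prop :=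
  A.Nonempty ∧ B.Nonempty ∧ Disjoint A B ∧ ∀ a ∈ A, ∀ b ∈ B, G.Adj a b

/-- A complete bipartite subgraph is nontrivial if both classes have at least 2 vertices. -/
def IsNontrivialBicliqueIn {V : Type*} (G : SimpleGraph V) (A B : Finset V) : Prop :=
  2 ≤ A.card ∧ 2 ≤ B.card ∧ Disjoint A B ∧ ∀ a ∈ A, ∀ b ∈ B, G.Adj a b

/-- `P` lists `m` pairwise edge-disjoint complete bipartite subgraphs of `G` such that
every edge of `G` belongs to exactly one of them. -/
def IsBicliqueDecomp {V : Type*} (G : SimpleGraph V) (m : ℕ)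
    (P : Fin m → Finset V × Finset V) : Prop :=
  (∀ i, IsBicliqueIn G (P i).1 (P i).2) ∧
  (∀ i j, i ≠ j →
    Disjoint (bicliqueEdges (P i).1 (P i).2) (bicliqueEdges (P j).1 (P j).2)) ∧
  (⋃ i, bicliqueEdges (P i).1 (P i).2) = G.edgeSet

/-- As above but with all complete bipartite subgraphs nontrivial. -/
def IsNontrivialBicliqueDecomp {V : Type*} (G : SimpleGraph V) (m : ℕ)
    (P : Fin m → Finset V × Finset V) : Prop :=
  (∀ i, IsNontrivialBicliqueIn G (P i).1 (P i).2) ∧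
  (∀ i j, i ≠ j →
    Disjoint (bicliqueEdges (P i).1 (P i).2) (bicliqueEdges (P j).1 (P j).2)) ∧
  (⋃ i, bicliqueEdges (P i).1 (P i).2) = G.edgeSet

/-- `τ(G)`: the minimum number of pairwise edge-disjoint complete bipartite subgraphs
of `G` so that each edge of `G` belongs to exactly one of them. -/
noncomputable def tau {V : Type*} (G : SimpleGraph V) : ℕ :=
  sInf {m | ∃ P : Fin m → Finset V × Finset V, IsBicliqueDecomp G m P}

/-- `τ'(G)`: the minimum number of pairwise edge-disjoint *nontrivial* complete bipartite
subgraphs of `G` covering all edges of `G`; `⊤` if there is no such cover. -/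
noncomputable def tau' {V : Type*} (G : SimpleGraph V) : ℕ∞ :=
  sInf {t : ℕ∞ | ∃ m : ℕ, t = m ∧ ∃ P : Fin m → Finset V × Finset V,
    IsNontrivialBicliqueDecomp G m P}

/-- `S` is an independent set of `G`. -/
def IsIndepFinset {V : Type*} (G : SimpleGraph V) (S : Finset V) : Prop :=
  ∀ a ∈ S, ∀ b ∈ S, ¬ G.Adj a b

/-- `α(G)`: the maximum size of an independent set of `G`. -/
noncomputable def alpha {V : Type*} (G : SimpleGraph V) : ℕ :=
  sSup {k | ∃ S : Finset V, S.card = k ∧ IsIndepFinset G S}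

/-- `S` induces in `G` a complete bipartite graph with nonempty vertex classes `A`, `B`. -/
def IsInducedCompleteBipartite {V : Type*} (G : SimpleGraph V) (S A B : Finset V) : Prop :=
  A.Nonempty ∧ B.Nonempty ∧ Disjoint A B ∧ (A : Set V) ∪ (B : Set V) = (S : Set V) ∧
  ∀ u ∈ S, ∀ v ∈ S, (G.Adj u v ↔ ((u ∈ A ∧ v ∈ B) ∨ (u ∈ B ∧ v ∈ A)))

/-- `β(G)`: the largest number of vertices of an induced complete bipartite subgraph. -/
noncomputable def beta {V : Type*} (G : SimpleGraph V) : ℕ :=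
  sSup {k | ∃ S A B : Finset V, IsInducedCompleteBipartite G S A B ∧ S.card = k}

/-- The Bernoulli measure on `Bool` giving `true` probability `p`. -/
noncomputable def bernoulliBool (p : ℝ) : Measure Bool :=
  p.toNNReal • Measure.dirac true + (1 - p).toNNReal • Measure.dirac false

instance (p : ℝ) : IsFiniteMeasure (bernoulliBool p) := by
  unfold bernoulliBool; infer_instance

/-- The Erdős–Rényi random graph `G(n,p)`: each unordered pair of vertices flips an
independent `p`-coin. Events about the graph are subsets of the coin-flip space. -/
noncomputable def erdosRenyi (n : ℕ) (p : ℝ) : Measure (Sym2 (Fin n) → Bool) :=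
  Measure.pi fun _ => bernoulliBool p

/-- The simple graph determined by the coin flips `ω`. -/
def graphOf (n : ℕ) (ω : Sym2 (Fin n) → Bool) : SimpleGraph (Fin n) :=
  SimpleGraph.fromEdgeSet {e | ω e = true}

/-- `f(k) = C(n,k) · 2^{-C(k,2)}`, the expected number of independent sets of size `k`
in `G(n,1/2)`. -/
noncomputable def f (n k : ℕ) : ℝ :=
  (n.choose k : ℝ) * (2 : ℝ) ^ (-(k.choose 2 : ℤ))

/-- `k₀(n)`: the largest `k` with `f(k) ≥ 1`. -/
noncomputable def k0 (n : ℕ) : ℕ := sSup {k | 1 ≤ f n k}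

/-- `g(k) = C(n,k+2) · (2^{k+1} - 1) · 2^{-C(k+2,2)}`, the expected number of induced
complete bipartite subgraphs on `k+2` vertices in `G(n,1/2)`. -/
noncomputable def g (n k : ℕ) : ℝ :=
  (n.choose (k + 2) : ℝ) * ((2 : ℝ) ^ (k + 1) - 1) * (2 : ℝ) ^ (-((k + 2).choose 2 : ℤ))

/-- The number of independent sets of size `k` in the graph determined by `ω`. -/
noncomputable def numIndep (n k : ℕ) (ω : Sym2 (Fin n) → Bool) : ℕ :=
  Set.ncard {S : Finset (Fin n) | S.card = k ∧ IsIndepFinset (graphOf n ω) S}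

/-- The number of `m`-element vertex subsets inducing a complete bipartite graph in the
graph determined by `ω`. -/
noncomputable def numBip (n m : ℕ) (ω : Sym2 (Fin n) → Bool) : ℕ :=
  Set.ncard {S : Finset (Fin n) | S.card = m ∧
    ∃ A B : Finset (Fin n), IsInducedCompleteBipartite (graphOf n ω) S A B}

lemma mem_bicliqueEdges {V : Type*} {A B : Finset V} {e : Sym2 V} :
    e ∈ bicliqueEdges A B ↔ ∃ a ∈ A, ∃ b ∈ B, e = s(a, b) := Iff.rfl

/-- For every finite simple graph `G` on `n` vertices with at least one edge,
`τ(G) ≤ n - β(G) + 1`. -/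
theorem tau_le_sub_beta_add_one (n : ℕ) (G : SimpleGraph (Fin n))
    (hG : G.edgeSet.Nonempty) :
    tau G ≤ n - beta G + 1 := by
  classical
  -- extract an edge
  obtain ⟨x, y, hxy⟩ : ∃ x y, G.Adj x y := by
    obtain ⟨e, he⟩ := hG
    induction e using Sym2.ind with
    | _ x y => exact ⟨x, y, he⟩
  -- the beta value is attained
  have hK : beta G ∈ {k | ∃ S A B : Finset (Fin n),
      IsInducedCompleteBipartite G S A B ∧ S.card = k} := by
    apply Nat.sSup_mem
    · refine ⟨2, {x, y}, {x}, {y}, ⟨⟨x, by simp⟩, ⟨y, by simp⟩,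
        by simp [hxy.ne, hxy.ne'], by simp [Set.pair_comm], ?_⟩, by
          rw [Finset.card_insert_of_notMem (by simp [hxy.ne, hxy.ne']), Finset.card_singleton]⟩
      intro u hu v hv
      simp only [Finset.mem_insert, Finset.mem_singleton] at hu hv
      rcases hu with rfl | rfl <;> rcases hv with rfl | rfl <;>
        simp [hxy, hxy.symm, hxy.ne, hxy.ne', G.irrefl]
    · refine ⟨n, fun k hk => ?_⟩
      obtain ⟨S, A, B, _, hc⟩ := hk
      calc k = S.card := hc.symm
        _ ≤ Fintype.card (Fin n) := S.card_le_univ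
        _ = n := Fintype.card_fin n
  obtain ⟨S, A, B, hSAB, hScard⟩ := hK
  obtain ⟨hA, hB, hABdisj, hUnion, hIff⟩ := hSAB
  have hAS : ∀ a ∈ A, a ∈ S := by
    intro a ha
    have : (a : Fin n) ∈ (↑A : Set (Fin n)) ∪ ↑B := Or.inl ha
    rw [hUnion] at this; exact this
  have hBS : ∀ b ∈ B, b ∈ S := by
    intro b hb
    have : (b : Fin n) ∈ (↑A : Set (Fin n)) ∪ ↑B := Or.inr hb
    rw [hUnion] at this; exact this
  -- neighborhoods for stars
  set N : Fin n → Finset (Fin n) :=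
    fun v => Finset.univ.filter fun u => G.Adj v u ∧ (u ∈ S ∨ v < u) with hN
  have hmemN : ∀ v u : Fin n, u ∈ N v ↔ G.Adj v u ∧ (u ∈ S ∨ v < u) := by
    intro v u; simp [hN]
  set F : Finset (Fin n) := Sᶜ.filter fun v => (N v).Nonempty with hF
  have hmemF : ∀ v : Fin n, v ∈ F ↔ v ∉ S ∧ (N v).Nonempty := by
    intro v; simp [hF]
  set PS : Finset (Finset (Fin n) × Finset (Fin n)) :=
    insert (A, B) (F.image fun v => ({v}, N v)) with hPS
  -- every element of PS is a biclique in G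
  have hbic : ∀ p ∈ PS, IsBicliqueIn G p.1 p.2 := by
    intro p hp
    rw [hPS, Finset.mem_insert] at hp
    rcases hp with rfl | hp
    · exact ⟨hA, hB, hABdisj, fun a ha b hb =>
        (hIff a (hAS a ha) b (hBS b hb)).2 (Or.inl ⟨ha, hb⟩)⟩
    · obtain ⟨v, hvF, rfl⟩ := Finset.mem_image.mp hp
      refine ⟨⟨v, Finset.mem_singleton_self v⟩, ((hmemF v).mp hvF).2, ?_, ?_⟩
      · rw [Finset.disjoint_singleton_left]
        intro hvN
        exact G.irrefl ((hmemN v v).mp hvN).1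
      · intro a ha b hb
        rw [Finset.mem_singleton] at ha; subst ha
        exact ((hmemN a b).mp hb).1
  -- every edge of a piece is an edge of G
  have hsub : ∀ p ∈ PS, bicliqueEdges p.1 p.2 ⊆ G.edgeSet := by
    intro p hp e he
    obtain ⟨a, ha, b, hb, rfl⟩ := mem_bicliqueEdges.mp he
    exact (hbic p hp).2.2.2 a ha b hb
  -- pairwise edge-disjointness
  have hdisj : ∀ p ∈ PS, ∀ q ∈ PS, p ≠ q →
      Disjoint (bicliqueEdges p.1 p.2) (bicliqueEdges q.1 q.2) := by
    have hABstar : ∀ v ∈ F,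
        Disjoint (bicliqueEdges A B) (bicliqueEdges {v} (N v)) := by
      intro v hvF
      rw [Set.disjoint_left]
      rintro e ⟨a, ha, b, hb, rfl⟩ ⟨a', ha', b', hb', heq⟩
      rw [Finset.mem_singleton] at ha'
      rw [ha'] at heq
      have hvS : v ∉ S := ((hmemF v).mp hvF).1
      rcases Sym2.eq_iff.mp heq with ⟨h1, _⟩ | ⟨h1, h2⟩
      · exact hvS (h1 ▸ hAS a ha)
      · exact hvS (h2 ▸ hBS b hb)
    intro p hp q hq hpq
    rw [hPS, Finset.mem_insert] at hp hq
    rcases hp with rfl | hp <;> rcases hq with rfl | hq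
    · exact absurd rfl hpq
    · obtain ⟨v, hvF, rfl⟩ := Finset.mem_image.mp hq
      exact hABstar v hvF
    · obtain ⟨v, hvF, rfl⟩ := Finset.mem_image.mp hp
      exact (hABstar v hvF).symm
    · obtain ⟨v, hvF, rfl⟩ := Finset.mem_image.mp hp
      obtain ⟨w, hwF, rfl⟩ := Finset.mem_image.mp hq
      have hvw : v ≠ w := by rintro rfl; exact hpq rfl
      rw [Set.disjoint_left]
      rintro e ⟨a, ha, b, hb, rfl⟩ ⟨a', ha', b', hb', heq⟩
      rw [Finset.mem_singleton] at ha ha'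
      rw [ha, ha'] at heq
      rcases Sym2.eq_iff.mp heq with ⟨h1, _⟩ | ⟨h1, h2⟩
      · exact hvw h1
      · -- v = b' ∈ N w and b = w ∈ N v
        have hwS : w ∉ S := ((hmemF w).mp hwF).1
        have hvS : v ∉ S := ((hmemF v).mp hvF).1
        have h1' : v < w := by
          rcases ((hmemN v b).mp hb).2 with h | h
          · exact absurd (h2 ▸ h) hwS
          · exact h2 ▸ h
        have h2' : w < v := by
          rcases ((hmemN w b').mp hb').2 with h | h
          · exact absurd (h1 ▸ h) hvS
          · exact h1 ▸ h
        exact absurd (h1'.trans h2') (lt_irrefl v)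
  -- every edge of G is in some piece
  have hcover : ∀ e ∈ G.edgeSet, ∃ p ∈ PS, e ∈ bicliqueEdges p.1 p.2 := by
    intro e he
    induction e using Sym2.ind with
    | _ u v =>
      rw [SimpleGraph.mem_edgeSet] at he
      have hstarpiece : ∀ w : Fin n, w ∈ F → ({w}, N w) ∈ PS := by
        intro w hw
        rw [hPS]
        exact Finset.mem_insert_of_mem (Finset.mem_image_of_mem _ hw)
      -- helper: if v' is in N of u' and s(u,v) = s(u',v'), produce the star piece
      have star : ∀ u' v' : Fin n, u' ∉ S → v' ∈ N u' → s(u, v) = s(u', v') →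
          ∃ p ∈ PS, s(u, v) ∈ bicliqueEdges p.1 p.2 := by
        intro u' v' hu'S hv' heq
        have hu'F : u' ∈ F := (hmemF u').mpr ⟨hu'S, ⟨v', hv'⟩⟩
        exact ⟨({u'}, N u'), hstarpiece u' hu'F,
          ⟨u', Finset.mem_singleton_self u', v', hv', heq⟩⟩
      by_cases huS : u ∈ S <;> by_cases hvS : v ∈ S
      · rcases (hIff u huS v hvS).1 he with ⟨ha, hb⟩ | ⟨ha, hb⟩
        · exact ⟨(A, B), by rw [hPS]; exact Finset.mem_insert_self _ _,
            ⟨u, ha, v, hb, rfl⟩⟩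
        · exact ⟨(A, B), by rw [hPS]; exact Finset.mem_insert_self _ _,
            ⟨v, hb, u, ha, Sym2.eq_swap⟩⟩
      · exact star v u hvS ((hmemN v u).mpr ⟨he.symm, Or.inl huS⟩) Sym2.eq_swap
      · exact star u v huS ((hmemN u v).mpr ⟨he, Or.inl hvS⟩) rfl
      · rcases lt_or_gt_of_ne he.ne with h | h
        · exact star u v huS ((hmemN u v).mpr ⟨he, Or.inr h⟩) rfl
        · exact star v u hvS ((hmemN v u).mpr ⟨he.symm, Or.inr h⟩) Sym2.eq_swap
  -- assemble the decomposition indexed by Fin PS.card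
  set P : Fin PS.card → Finset (Fin n) × Finset (Fin n) :=
    fun i => ((PS.equivFin.symm i : PS) : Finset (Fin n) × Finset (Fin n)) with hP
  have hPmem : ∀ i, P i ∈ PS := fun i => (PS.equivFin.symm i).2
  have hdecomp : IsBicliqueDecomp G PS.card P := by
    refine ⟨fun i => hbic _ (hPmem i), fun i j hij => ?_, ?_⟩
    · apply hdisj _ (hPmem i) _ (hPmem j)
      intro h
      apply hij
      have : (PS.equivFin.symm i) = (PS.equivFin.symm j) := Subtype.ext h
      exact PS.equivFin.symm.injective.eq_iff.mp this ▸ rfl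
    · ext e
      simp only [Set.mem_iUnion]
      constructor
      · rintro ⟨i, hi⟩
        exact hsub _ (hPmem i) hi
      · intro he
        obtain ⟨p, hp, hep⟩ := hcover e he
        refine ⟨PS.equivFin ⟨p, hp⟩, ?_⟩
        have : P (PS.equivFin ⟨p, hp⟩) = p := by
          rw [hP]; simp
        rw [this]; exact hep
  -- count the pieces
  have hcount : PS.card ≤ n - beta G + 1 := by
    have h1 : PS.card ≤ (F.image fun v => (({v} : Finset (Fin n)), N v)).card + 1 := by
      rw [hPS]; exact Finset.card_insert_le _ _
    have h2 : (F.image fun v => (({v} : Finset (Fin n)), N v)).card ≤ F.card :=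
      Finset.card_image_le
    have h3 : F.card ≤ Sᶜ.card := Finset.card_filter_le _ _
    have h4 : Sᶜ.card = n - beta G := by
      rw [Finset.card_compl, Fintype.card_fin, hScard]
    omega
  calc tau G ≤ PS.card := Nat.sInf_le ⟨P, hdecomp⟩
    _ ≤ n - beta G + 1 := hcount

end RandomBipartiteDecomposition
end

section
/- If p = p(n) satisfies p·n^{7/8} → 0 as n → ∞, then for G = G(n,p) the probability that τ(G) = n − max γ(H) tends to 1 as n → ∞, where the maximum is taken over all induced subgraphs H of G in which every connected component is either an isolated vertex or a cycle of length 4. -/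
open MeasureTheory ProbabilityTheory Filter Real

namespace RandomBipartiteDecomposition

/-- `q` induces a cycle of length 4 in `G`: it has 4 vertices, each with exactly two
neighbours inside `q`. -/
def IsC4 {V : Type*} (G : SimpleGraph V) (q : Finset V) : Prop :=
  q.card = 4 ∧ ∀ v ∈ q, Set.ncard {u ∈ (q : Set V) | G.Adj v u} = 2

/-- The induced subgraph of `G` on `S` has every connected component either an isolated
vertex or a cycle of length 4; `Q` is the collection of vertex sets of the 4-cycles. -/
def IsC4Config {V : Type*} (G : SimpleGraph V) (S : Finset V) (Q : Finset (Finset V)) : Prop :=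
  (∀ q ∈ Q, q ⊆ S ∧ IsC4 G q) ∧
  (∀ q ∈ Q, ∀ q' ∈ Q, q ≠ q' → Disjoint q q') ∧
  (∀ v ∈ S, ∀ u ∈ S, G.Adj v u → ∃ q ∈ Q, v ∈ q ∧ u ∈ q)

/-- `max γ(H)` over induced subgraphs `H` of `G` all of whose components are isolated
vertices or 4-cycles, where `γ(H) = |V(H)| - #(4-cycles of H)`. -/
noncomputable def gammaMax {V : Type*} (G : SimpleGraph V) : ℕ :=
  sSup {m | ∃ S : Finset V, ∃ Q : Finset (Finset V), IsC4Config G S Q ∧ m = S.card - Q.card}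

/-!
Call `G` sparse if no set of at most 7 vertices spans more edges than it has vertices. In
`G(n,p)` the expected number of sets of `w ≤ 7` vertices spanning `w + 1` edges is
`O(n^w p^(w+1)) = O((p n^(7/8))^(w+1))`, so `G(n,p)` is sparse with probability tending to 1.

In a sparse graph every complete bipartite subgraph is a star or a `K_{2,2}`, each `K_{2,2}` is an
induced 4-cycle, and two edge-disjoint `K_{2,2}`s are vertex-disjoint. Given a decomposition,
delete the star centres and, from each `K_{2,2}` they hit, a side through a centre; what remains
induces isolated vertices and 4-cycles, and counting gives `γ ≥ n - τ`. Conversely, if `H` is an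
induced subgraph of isolated vertices and 4-cycles, stars at the vertices outside `H` (taken one at
a time, each removing the remaining edges at its centre) and one `K_{2,2}` per 4-cycle decompose
`G` into at most `n - γ(H)` parts.
-/

open Finset SimpleGraph

section Biclique

variable {V : Type*} {G H : SimpleGraph V} {q A B : Finset V}

theorem mk_mem_bicliqueEdges {u v : V} :
    s(u, v) ∈ bicliqueEdges A B ↔ (u ∈ A ∧ v ∈ B) ∨ (u ∈ B ∧ v ∈ A) := by
  constructor
  · rintro ⟨a, ha, b, hb, h⟩
    rcases Sym2.eq_iff.1 h with ⟨rfl, rfl⟩ | ⟨rfl, rfl⟩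
    exacts [Or.inl ⟨ha, hb⟩, Or.inr ⟨hb, ha⟩]
  · rintro (⟨hu, hv⟩ | ⟨hu, hv⟩)
    exacts [⟨u, hu, v, hv, rfl⟩, ⟨v, hv, u, hu, Sym2.eq_swap⟩]

theorem mem_or_mem_of_mk_mem_bicliqueEdges {X : Finset V} {u v : V} (hX : X = A ∨ X = B)
    (h : s(u, v) ∈ bicliqueEdges A B) : u ∈ X ∨ v ∈ X := by
  rcases hX with rfl | rfl <;> rcases mk_mem_bicliqueEdges.1 h with h | h <;> tauto

theorem bicliqueEdges_subset_edgeSet (h : ∀ a ∈ A, ∀ b ∈ B, G.Adj a b) :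
    bicliqueEdges A B ⊆ G.edgeSet := by
  rintro _ ⟨a, ha, b, hb, rfl⟩
  exact h a ha b hb

theorem IsBicliqueIn.mono (hGH : G ≤ H) (h : IsBicliqueIn G A B) : IsBicliqueIn H A B :=
  ⟨h.1, h.2.1, h.2.2.1, fun a ha b hb => hGH (h.2.2.2 a ha b hb)⟩

theorem IsInducedCompleteBipartite.symm (h : IsInducedCompleteBipartite G q A B) :
    IsInducedCompleteBipartite G q B A := by
  refine ⟨h.2.1, h.1, h.2.2.1.symm, by rw [Set.union_comm, h.2.2.2.1], fun u hu v hv => ?_⟩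
  rw [h.2.2.2.2 u hu v hv, or_comm]

variable [DecidableEq V]

def bicliqueEdgeFinset (A B : Finset V) : Finset (Sym2 V) :=
  (A ×ˢ B).image fun x => s(x.1, x.2)

theorem coe_bicliqueEdgeFinset : (bicliqueEdgeFinset A B : Set (Sym2 V)) = bicliqueEdges A B := by
  ext e
  simp [bicliqueEdgeFinset, bicliqueEdges, eq_comm, and_assoc]

theorem card_bicliqueEdgeFinset (h : Disjoint A B) : #(bicliqueEdgeFinset A B) = #A * #B := by
  rw [bicliqueEdgeFinset, card_image_of_injOn, card_product]
  rintro ⟨a, b⟩ hab ⟨a', b'⟩ hab' he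
  simp only [coe_product, Set.mem_prod, mem_coe] at hab hab'
  rcases Sym2.eq_iff.1 he with ⟨rfl, rfl⟩ | ⟨rfl, -⟩
  · rfl
  · exact absurd hab'.2 (disjoint_left.1 h hab.1)

theorem bicliqueEdgeFinset_subset_sym2 : bicliqueEdgeFinset A B ⊆ (A ∪ B).sym2 := by
  intro e he
  obtain ⟨a, ha, b, hb, rfl⟩ : e ∈ bicliqueEdges A B := by
    rw [← coe_bicliqueEdgeFinset]; exact he
  simp [ha, hb]

end Biclique

section C4

variable {V : Type*} {G : SimpleGraph V} {q A B : Finset V}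

theorem IsC4.card_filter_adj [DecidableRel G.Adj] (h : IsC4 G q) {x : V} (hx : x ∈ q) :
    #(q.filter (G.Adj x)) = 2 := by
  rw [← h.2 x hx, ← Set.ncard_coe_finset, coe_filter]
  rfl

variable [DecidableEq V]

theorem IsInducedCompleteBipartite.eq_union (h : IsInducedCompleteBipartite G q A B) :
    q = A ∪ B := by
  rw [← coe_inj, coe_union, h.2.2.2.1]

theorem IsInducedCompleteBipartite.adj_iff (h : IsInducedCompleteBipartite G q A B) {u v : V} :
    G.Adj u v ∧ u ∈ q ∧ v ∈ q ↔ s(u, v) ∈ bicliqueEdges A B := by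
  have hq := h.eq_union
  constructor
  · rintro ⟨huv, hu, hv⟩
    exact mk_mem_bicliqueEdges.2 ((h.2.2.2.2 u hu v hv).1 huv)
  · intro he
    have huv := mk_mem_bicliqueEdges.1 he
    have hu : u ∈ q := by rw [hq, mem_union]; tauto
    have hv : v ∈ q := by rw [hq, mem_union]; tauto
    exact ⟨(h.2.2.2.2 u hu v hv).2 huv, hu, hv⟩

theorem IsInducedCompleteBipartite.setOf_adj_of_mem_left (h : IsInducedCompleteBipartite G q A B)
    {v : V} (hv : v ∈ A) : {u ∈ (q : Set V) | G.Adj v u} = B := by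
  have hvB : v ∉ B := disjoint_left.1 h.2.2.1 hv
  have hvq : v ∈ q := h.eq_union ▸ mem_union_left _ hv
  ext u
  have := h.adj_iff (u := v) (v := u)
  rw [mk_mem_bicliqueEdges] at this
  simp only [Set.mem_ofPred_eq, mem_coe]
  tauto

theorem isC4_of_isInducedCompleteBipartite (hA : #A = 2) (hB : #B = 2)
    (h : IsInducedCompleteBipartite G q A B) : IsC4 G q := by
  have hq := h.eq_union
  refine ⟨by rw [hq, card_union_of_disjoint h.2.2.1, hA, hB], fun v hv => ?_⟩
  rcases mem_union.1 (hq ▸ hv) with hvA | hvB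
  · rw [h.setOf_adj_of_mem_left hvA, Set.ncard_coe_finset, hB]
  · rw [h.symm.setOf_adj_of_mem_left hvB, Set.ncard_coe_finset, hA]

theorem IsC4.filter_adj_eq_of_not_adj [DecidableRel G.Adj] (h : IsC4 G q) {x a : V} (hx : x ∈ q)
    (ha : a ∈ q) (hxa : ¬G.Adj a x) : q.filter (G.Adj x) = q.filter (G.Adj a) := by
  obtain rfl | hne := eq_or_ne x a
  · rfl
  -- both neighbourhoods lie in the 2-set `q \ {x, a}`
  set T := (q.erase x).erase a
  have hT : #T = 2 := by
    rw [card_erase_of_mem (mem_erase.2 ⟨hne.symm, ha⟩), card_erase_of_mem hx, h.1]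
  have hxT : q.filter (G.Adj x) = T := eq_of_subset_of_card_le (fun y hy => by
    rw [mem_filter] at hy
    refine mem_erase.2 ⟨?_, mem_erase.2 ⟨(G.ne_of_adj hy.2).symm, hy.1⟩⟩
    rintro rfl
    exact hxa hy.2.symm) (by rw [hT, h.card_filter_adj hx])
  have haT : q.filter (G.Adj a) = T := eq_of_subset_of_card_le (fun y hy => by
    rw [mem_filter] at hy
    refine mem_erase.2 ⟨(G.ne_of_adj hy.2).symm, mem_erase.2 ⟨?_, hy.1⟩⟩
    rintro rfl
    exact hxa hy.2) (by rw [hT, h.card_filter_adj ha])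
  rw [hxT, haT]

/-- For any `a ∈ q`, the sides are `q` minus the neighbours of `a`, and the neighbours of `a`. -/
theorem IsC4.exists_isInducedCompleteBipartite (h : IsC4 G q) :
    ∃ A B, #A = 2 ∧ #B = 2 ∧ IsInducedCompleteBipartite G q A B := by
  classical
  set N : V → Finset V := fun x => q.filter (G.Adj x) with hN
  have hNq : ∀ x, N x ⊆ q := fun x => filter_subset _ _
  obtain ⟨a, ha⟩ : q.Nonempty := card_pos.1 (by rw [h.1]; norm_num)
  set A := q \ N a
  have hA : #A = 2 := by rw [card_sdiff_of_subset (hNq a), h.1, h.card_filter_adj ha]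
  have hNA : ∀ x ∈ A, N x = N a := fun x hx =>
    h.filter_adj_eq_of_not_adj (mem_sdiff.1 hx).1 ha fun hax =>
      (mem_sdiff.1 hx).2 (mem_filter.2 ⟨(mem_sdiff.1 hx).1, hax⟩)
  have hNB : ∀ b ∈ N a, N b = A := by
    intro b hb
    refine (eq_of_subset_of_card_le (fun x hx => ?_) ?_).symm
    · have : b ∈ N x := hNA x hx ▸ hb
      simp only [hN, mem_filter] at this ⊢
      exact ⟨(mem_sdiff.1 hx).1, this.2.symm⟩
    · rw [hA, h.card_filter_adj (hNq a hb)]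
  refine ⟨A, N a, hA, h.card_filter_adj ha, ⟨a, mem_sdiff.2 ⟨ha, by simp [hN]⟩⟩,
    card_pos.1 (by rw [h.card_filter_adj ha]; norm_num), sdiff_disjoint,
    by rw [← coe_union, sdiff_union_of_subset (hNq a)], fun u hu v hv => ?_⟩
  have huv : G.Adj u v ↔ v ∈ N u := by simp [hN, hv]
  by_cases huA : u ∈ A
  · rw [huv, hNA u huA]
    have : u ∉ N a := (mem_sdiff.1 huA).2
    tauto
  · have huB : u ∈ N a := by simpa [A, hu] using huA
    rw [huv, hNB u huB]
    tauto

end C4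

section Sparse

variable {V : Type*} {G : SimpleGraph V} {k : ℕ} {A B A' B' : Finset V}

def IsSparseUpTo (G : SimpleGraph V) (k : ℕ) : Prop :=
  ∀ W : Finset V, #W ≤ k → ∀ F ⊆ W.sym2, (F : Set (Sym2 V)) ⊆ G.edgeSet → #F ≤ #W

theorem IsSparseUpTo.mono {j : ℕ} (hG : IsSparseUpTo G k) (hjk : j ≤ k) : IsSparseUpTo G j :=
  fun W hW => hG W (hW.trans hjk)

variable [DecidableEq V]

theorem IsSparseUpTo.card_mul_card_le (hG : IsSparseUpTo G k) (hk : #A + #B ≤ k)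
    (hAB : Disjoint A B) (hadj : ∀ a ∈ A, ∀ b ∈ B, G.Adj a b) : #A * #B ≤ #A + #B := by
  rw [← card_bicliqueEdgeFinset hAB, ← card_union_of_disjoint hAB]
  refine hG _ (by rwa [card_union_of_disjoint hAB]) _ bicliqueEdgeFinset_subset_sym2 ?_
  rw [coe_bicliqueEdgeFinset]
  exact bicliqueEdges_subset_edgeSet hadj

theorem IsSparseUpTo.not_two_le_and_three_le (hG : IsSparseUpTo G 5) (hAB : Disjoint A B)
    (hadj : ∀ a ∈ A, ∀ b ∈ B, G.Adj a b) : ¬(2 ≤ #A ∧ 3 ≤ #B) := by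
  rintro ⟨hA, hB⟩
  obtain ⟨A₂, hA₂A, hA₂⟩ := exists_subset_card_eq hA
  obtain ⟨B₃, hB₃B, hB₃⟩ := exists_subset_card_eq hB
  have := hG.card_mul_card_le (by omega) (hAB.mono hA₂A hB₃B)
    fun a ha b hb => hadj a (hA₂A ha) b (hB₃B hb)
  rw [hA₂, hB₃] at this
  omega

theorem IsSparseUpTo.card_eq_one_or_card_eq_one_or (hG : IsSparseUpTo G 5)
    (h : IsBicliqueIn G A B) : #A = 1 ∨ #B = 1 ∨ (#A = 2 ∧ #B = 2) := by
  obtain ⟨hA, hB, hAB, hadj⟩ := h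
  have h₁ := hG.not_two_le_and_three_le hAB hadj
  have h₂ := hG.not_two_le_and_three_le hAB.symm fun b hb a ha => (hadj a ha b hb).symm
  have := hA.card_pos
  have := hB.card_pos
  omega

theorem IsSparseUpTo.isInducedCompleteBipartite (hG : IsSparseUpTo G 4) (hA : #A = 2)
    (hB : #B = 2) (h : IsBicliqueIn G A B) : IsInducedCompleteBipartite G (A ∪ B) A B := by
  refine ⟨h.1, h.2.1, h.2.2.1, (coe_union A B).symm,
    fun u hu v hv => ⟨fun huv => ?_, fun huv => ?_⟩⟩
  · rw [← mk_mem_bicliqueEdges, ← coe_bicliqueEdgeFinset, mem_coe]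
    by_contra hnot
    have := hG (A ∪ B) (by rw [card_union_of_disjoint h.2.2.1]; omega)
      (insert s(u, v) (bicliqueEdgeFinset A B))
      (insert_subset (mk_mem_sym2_iff.2 ⟨hu, hv⟩) bicliqueEdgeFinset_subset_sym2)
      (by
        rw [coe_insert, coe_bicliqueEdgeFinset]
        exact Set.insert_subset huv (bicliqueEdges_subset_edgeSet h.2.2.2))
    rw [card_insert_of_notMem hnot, card_bicliqueEdgeFinset h.2.2.1,
      card_union_of_disjoint h.2.2.1, hA, hB] at this
    omega
  · rcases huv with ⟨hu, hv⟩ | ⟨hu, hv⟩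
    exacts [h.2.2.2 u hu v hv, (h.2.2.2 v hv u hu).symm]

/-- Two edge-disjoint `K_{2,2}`s sharing a vertex would span at least 8 edges on at most 7
vertices. -/
theorem IsSparseUpTo.disjoint_of_disjoint_bicliqueEdges (hG : IsSparseUpTo G 7)
    (hA : #A = 2) (hB : #B = 2) (hA' : #A' = 2) (hB' : #B' = 2)
    (h : IsBicliqueIn G A B) (h' : IsBicliqueIn G A' B')
    (hE : Disjoint (bicliqueEdges A B) (bicliqueEdges A' B')) :
    Disjoint (A ∪ B) (A' ∪ B') := by
  rw [← coe_bicliqueEdgeFinset, ← coe_bicliqueEdgeFinset, disjoint_coe] at hE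
  by_contra hmeet
  have hW : #(A ∪ B ∪ (A' ∪ B')) ≤ 7 := by
    have := card_union_add_card_inter (A ∪ B) (A' ∪ B')
    have := card_pos.2 (not_disjoint_iff_nonempty_inter.1 hmeet)
    rw [card_union_of_disjoint h.2.2.1, card_union_of_disjoint h'.2.2.1] at *
    omega
  have := hG _ hW (bicliqueEdgeFinset A B ∪ bicliqueEdgeFinset A' B')
    (union_subset (bicliqueEdgeFinset_subset_sym2.trans (sym2_mono subset_union_left))
      (bicliqueEdgeFinset_subset_sym2.trans (sym2_mono subset_union_right)))
    (by
      rw [coe_union, coe_bicliqueEdgeFinset, coe_bicliqueEdgeFinset]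
      exact Set.union_subset (bicliqueEdges_subset_edgeSet h.2.2.2)
        (bicliqueEdges_subset_edgeSet h'.2.2.2))
  rw [card_union_of_disjoint hE, card_bicliqueEdgeFinset h.2.2.1,
    card_bicliqueEdgeFinset h'.2.2.1, hA, hB, hA', hB'] at this
  omega

end Sparse

section Decomposable

variable {V : Type*} {G : SimpleGraph V} {m : ℕ}

def BicliqueDecomposable (G : SimpleGraph V) (m : ℕ) : Prop :=
  ∃ k ≤ m, ∃ P : Fin k → Finset V × Finset V, IsBicliqueDecomp G k P

theorem BicliqueDecomposable.mono {n : ℕ} (h : BicliqueDecomposable G m) (hmn : m ≤ n) :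
    BicliqueDecomposable G n :=
  let ⟨k, hk, P, hP⟩ := h
  ⟨k, hk.trans hmn, P, hP⟩

theorem BicliqueDecomposable.tau_le (h : BicliqueDecomposable G m) : tau G ≤ m := by
  obtain ⟨k, hk, P, hP⟩ := h
  exact (Nat.sInf_le (show k ∈ {m | ∃ P, IsBicliqueDecomp G m P} from ⟨P, hP⟩)).trans hk

theorem BicliqueDecomposable.exists_isBicliqueDecomp_tau (h : BicliqueDecomposable G m) :
    ∃ P, IsBicliqueDecomp G (tau G) P :=
  let ⟨k, _, P, hP⟩ := h
  Nat.sInf_mem (s := {m | ∃ P, IsBicliqueDecomp G m P}) ⟨k, P, hP⟩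

theorem bicliqueDecomposable_of_family {ι : Type*} [Fintype ι] (P : ι → Finset V × Finset V)
    (hbic : ∀ i, IsBicliqueIn G (P i).1 (P i).2)
    (hdisj : ∀ i j, i ≠ j →
      Disjoint (bicliqueEdges (P i).1 (P i).2) (bicliqueEdges (P j).1 (P j).2))
    (hcover : ⋃ i, bicliqueEdges (P i).1 (P i).2 = G.edgeSet) :
    BicliqueDecomposable G (Fintype.card ι) := by
  let e := (Fintype.equivFin ι).symm
  refine ⟨_, le_rfl, P ∘ e, fun i => hbic _, fun i j hij => hdisj _ _ (e.injective.ne hij), ?_⟩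
  rw [← hcover]
  exact e.surjective.iUnion_comp fun i => bicliqueEdges (P i).1 (P i).2

theorem BicliqueDecomposable.of_deleteEdges {A B : Finset V} (hAB : IsBicliqueIn G A B)
    (h : BicliqueDecomposable (G.deleteEdges (bicliqueEdges A B)) m) :
    BicliqueDecomposable G (m + 1) := by
  obtain ⟨k, hk, P, hbic, hdisj, hcover⟩ := h
  have hsub : ∀ i, bicliqueEdges (P i).1 (P i).2 ⊆ G.edgeSet \ bicliqueEdges A B := fun i =>
    edgeSet_deleteEdges (G := G) _ ▸ hcover ▸
      Set.subset_iUnion (fun i => bicliqueEdges (P i).1 (P i).2) i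
  refine (bicliqueDecomposable_of_family (ι := Option (Fin k)) (fun i => i.elim (A, B) P)
    ?_ ?_ ?_).mono (by simpa using hk)
  · rintro (_ | i)
    exacts [hAB, (hbic i).mono (deleteEdges_le _)]
  · rintro (_ | i) (_ | j) hij
    · exact absurd rfl hij
    · exact Set.disjoint_of_subset_right (hsub j) Set.disjoint_sdiff_right
    · exact Set.disjoint_of_subset_left (hsub i) Set.disjoint_sdiff_left
    · exact hdisj i j (fun h => hij (congrArg some h))
  · rw [Set.iUnion_option]
    simp only [Option.elim_none, Option.elim_some]
    rw [hcover, edgeSet_deleteEdges,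
      Set.union_sdiff_cancel (bicliqueEdges_subset_edgeSet hAB.2.2.2)]

theorem BicliqueDecomposable.of_deleteIncidenceSet [Fintype V] {v : V}
    (h : BicliqueDecomposable (G.deleteIncidenceSet v) m) : BicliqueDecomposable G (m + 1) := by
  classical
  set N := univ.filter (G.Adj v)
  have hG : G.deleteIncidenceSet v = G.deleteEdges (bicliqueEdges {v} N) := by
    ext a b
    rw [deleteIncidenceSet_adj, deleteEdges_adj, mk_mem_bicliqueEdges]
    simp only [mem_singleton, N, mem_filter, mem_univ, true_and]
    constructor
    · rintro ⟨hab, hav, hbv⟩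
      exact ⟨hab, by tauto⟩
    · rintro ⟨hab, hnot⟩
      exact ⟨hab, fun hav => hnot (Or.inl ⟨hav, hav ▸ hab⟩),
        fun hbv => hnot (Or.inr ⟨hbv ▸ hab.symm, hbv⟩)⟩
  rcases N.eq_empty_or_nonempty with hN | hN
  · have hempty : G.deleteEdges (bicliqueEdges {v} ∅) = G := by simp [bicliqueEdges]
    rw [hG, hN, hempty] at h
    exact BicliqueDecomposable.mono h m.le_succ
  · refine .of_deleteEdges ⟨singleton_nonempty v, hN, ?_, ?_⟩ (hG ▸ h)
    · simp [N]
    · simp [N]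

variable [DecidableEq V]

theorem BicliqueDecomposable.of_deleteEdges_incident [Fintype V] (D : Finset V) :
    ∀ {G : SimpleGraph V} {m : ℕ}, BicliqueDecomposable (G.deleteEdges {e | ∃ v ∈ D, v ∈ e}) m →
      BicliqueDecomposable G (m + #D) := by
  induction D using Finset.induction_on with
  | empty => intro G m h; simpa using h
  | insert v D hv ih =>
    intro G m h
    rw [card_insert_of_notMem hv, ← add_assoc]
    have hG : (G.deleteIncidenceSet v).deleteEdges {e | ∃ w ∈ D, w ∈ e} =
        G.deleteEdges {e | ∃ w ∈ insert v D, w ∈ e} := by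
      ext a b
      simp [deleteIncidenceSet_adj]
      tauto
    exact .of_deleteIncidenceSet (ih (hG ▸ h))

theorem IsC4Config.bicliqueDecomposable {S : Finset V} {Q : Finset (Finset V)}
    (h : IsC4Config G S Q) : BicliqueDecomposable (G.deleteEdges {e | ∃ v ∉ S, v ∈ e}) #Q := by
  obtain ⟨hQ, hQdisj, hSadj⟩ := h
  choose A B hA hB hAB using fun q : Q => (hQ q q.2).2.exists_isInducedCompleteBipartite
  have hedge : ∀ (q : Q) {u v : V}, s(u, v) ∈ bicliqueEdges (A q) (B q) ↔
      G.Adj u v ∧ u ∈ (q : Finset V) ∧ v ∈ (q : Finset V) := fun q => (hAB q).adj_iff.symm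
  have hsub : ∀ (q : Q) {v : V}, v ∈ (q : Finset V) → v ∈ S := fun q _ hv => (hQ q q.2).1 hv
  have hkept : ∀ {u v : V}, (G.deleteEdges {e | ∃ v ∉ S, v ∈ e}).Adj u v ↔
      G.Adj u v ∧ u ∈ S ∧ v ∈ S := by
    simp only [deleteEdges_adj, Set.mem_ofPred_eq, Sym2.mem_iff]
    grind
  have hfam := bicliqueDecomposable_of_family (G := G.deleteEdges {e | ∃ v ∉ S, v ∈ e})
    (fun q : Q => (A q, B q)) ?bic ?disj ?cover
  · simpa using hfam
  case bic =>
    intro q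
    refine ⟨card_pos.1 (by rw [hA q]; norm_num), card_pos.1 (by rw [hB q]; norm_num),
      (hAB q).2.2.1, fun a ha b hb => ?_⟩
    obtain ⟨hab, haq, hbq⟩ := (hedge q).1 (mk_mem_bicliqueEdges.2 (Or.inl ⟨ha, hb⟩))
    exact hkept.2 ⟨hab, hsub q haq, hsub q hbq⟩
  case disj =>
    intro q q' hqq'
    rw [Set.disjoint_left]
    intro e he he'
    induction e using Sym2.ind with
    | _ u v =>
      exact disjoint_left.1 (hQdisj q q.2 q' q'.2 (Subtype.coe_injective.ne hqq'))
        ((hedge q).1 he).2.1 ((hedge q').1 he').2.1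
  case cover =>
    ext e
    induction e using Sym2.ind with
    | _ u v =>
      simp only [Set.mem_iUnion, mem_edgeSet, hedge, hkept]
      constructor
      · rintro ⟨q, huv, hu, hv⟩
        exact ⟨huv, hsub q hu, hsub q hv⟩
      · rintro ⟨huv, hu, hv⟩
        obtain ⟨q, hq, huq, hvq⟩ := hSadj u hu v hv huv
        exact ⟨⟨q, hq⟩, huv, huq, hvq⟩

end Decomposable

section GammaMax

variable {V : Type*} {G : SimpleGraph V}

theorem IsC4Config.card_le {S : Finset V} {Q : Finset (Finset V)} (h : IsC4Config G S Q) :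
    #Q ≤ #S := by
  classical
  refine (card_le_card_biUnion (f := id) (fun q hq q' hq' hne => h.2.1 q hq q' hq' hne)
    fun q hq => card_pos.1 ?_).trans (card_le_card (biUnion_subset.2 fun q hq => (h.1 q hq).1))
  rw [id, (h.1 q hq).2.1]
  norm_num

variable [Fintype V]

theorem bddAbove_gammaMax_set (G : SimpleGraph V) :
    BddAbove {m | ∃ S : Finset V, ∃ Q : Finset (Finset V), IsC4Config G S Q ∧ m = #S - #Q} := by
  refine ⟨Fintype.card V, ?_⟩
  rintro _ ⟨S, Q, -, rfl⟩
  exact (Nat.sub_le _ _).trans (card_le_univ S)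

theorem exists_isC4Config_gammaMax (G : SimpleGraph V) :
    ∃ S Q, IsC4Config G S Q ∧ gammaMax G = #S - #Q :=
  Nat.sSup_mem (s := {m | ∃ S : Finset V, ∃ Q : Finset (Finset V), IsC4Config G S Q ∧ m = #S - #Q})
    ⟨0, ∅, ∅, by simp [IsC4Config], rfl⟩ (bddAbove_gammaMax_set G)

theorem IsC4Config.sub_le_gammaMax {S : Finset V} {Q : Finset (Finset V)}
    (h : IsC4Config G S Q) : #S - #Q ≤ gammaMax G :=
  le_csSup (bddAbove_gammaMax_set G) ⟨S, Q, h, rfl⟩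

theorem gammaMax_le_card (G : SimpleGraph V) : gammaMax G ≤ Fintype.card V := by
  obtain ⟨S, Q, -, h⟩ := exists_isC4Config_gammaMax G
  exact h ▸ (Nat.sub_le _ _).trans (card_le_univ S)

variable [DecidableEq V]

/-- Stars at the vertices outside `S`, one `K_{2,2}` for each 4-cycle of the configuration. -/
theorem bicliqueDecomposable_card_sub_gammaMax (G : SimpleGraph V) :
    BicliqueDecomposable G (Fintype.card V - gammaMax G) := by
  obtain ⟨S, Q, hSQ, hγ⟩ := exists_isC4Config_gammaMax G
  have hdec := BicliqueDecomposable.of_deleteEdges_incident Sᶜ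
    (by simpa using hSQ.bicliqueDecomposable)
  refine hdec.mono ?_
  have := hSQ.card_le
  have := card_le_univ S
  rw [card_compl, hγ]
  omega

end GammaMax

section LowerBound

variable {V : Type*} [DecidableEq V] {G : SimpleGraph V}

theorem card_union_biUnion_le {ι : Type*} {s : Finset V} {J : Finset ι} {X : ι → Finset V}
    (hX : ∀ j ∈ J, #(X j \ s) ≤ 1) : #(s ∪ J.biUnion X) ≤ #s + #J := by
  have : s ∪ J.biUnion X = s ∪ J.biUnion fun j => X j \ s := by
    ext x
    by_cases hx : x ∈ s <;> simp [hx]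
  rw [this]
  exact (card_union_le _ _).trans
    (Nat.add_le_add_left (by simpa using card_biUnion_le_card_mul J _ 1 hX) _)

theorem card_sdiff_le_one_of_not_disjoint {X D : Finset V} (hX : #X = 2) (h : ¬Disjoint X D) :
    #(X \ D) ≤ 1 := by
  obtain ⟨x, hx⟩ := not_disjoint_iff_nonempty_inter.1 h
  rw [card_sdiff, hX, inter_comm]
  have := card_pos.2 ⟨x, hx⟩
  omega

theorem exists_side_not_disjoint (A B D : Finset V) :
    ∃ X, (X = A ∨ X = B) ∧ (¬Disjoint (A ∪ B) D → ¬Disjoint X D) := by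
  by_cases hA : Disjoint A D
  · exact ⟨B, Or.inr rfl, fun h hB => h (disjoint_union_left.2 ⟨hA, hB⟩)⟩
  · exact ⟨A, Or.inl rfl, fun _ => hA⟩

variable [Fintype V]

theorem card_sub_le_gammaMax_of_cover {ι : Type*} (D : Finset V) (J : Finset ι)
    (q : ι → Finset V) (hJ : ∀ j ∈ J, IsC4 G (q j) ∧ Disjoint (q j) D)
    (hJdisj : ∀ i ∈ J, ∀ j ∈ J, i ≠ j → Disjoint (q i) (q j))
    (hcover : ∀ u v, G.Adj u v → u ∈ D ∨ v ∈ D ∨ ∃ j ∈ J, u ∈ q j ∧ v ∈ q j) :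
    Fintype.card V - (#D + #J) ≤ gammaMax G := by
  have hconf : IsC4Config G Dᶜ (J.image q) := by
    simp only [IsC4Config, mem_image, forall_exists_index, and_imp, forall_apply_eq_imp_iff₂]
    refine ⟨fun j hj => ⟨subset_compl_iff_disjoint_right.2 (hJ j hj).2, (hJ j hj).1⟩,
      fun i hi j hj hne => hJdisj i hi j hj (by rintro rfl; exact hne rfl),
      fun u hu v hv huv => ?_⟩
    rw [mem_compl] at hu hv
    simpa [hu, hv] using hcover u v huv
  have := hconf.sub_le_gammaMax
  have := card_image_le (s := J) (f := q)
  rw [card_compl] at *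
  omega

/-- Delete `D₀` and, from every `K_{2,2}` that meets `D₀`, a whole side meeting `D₀`: such a side
adds at most one new vertex, and the untouched `K_{2,2}`s remain induced 4-cycles. -/
theorem card_sub_le_gammaMax_of_k22_cover {ι : Type*} (D₀ : Finset V) (J : Finset ι)
    (A B : ι → Finset V)
    (hJ : ∀ j ∈ J, #(A j) = 2 ∧ #(B j) = 2 ∧
      IsInducedCompleteBipartite G (A j ∪ B j) (A j) (B j))
    (hJdisj : ∀ i ∈ J, ∀ j ∈ J, i ≠ j → Disjoint (A i ∪ B i) (A j ∪ B j))
    (hcover : ∀ u v, G.Adj u v →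
      u ∈ D₀ ∨ v ∈ D₀ ∨ ∃ j ∈ J, s(u, v) ∈ bicliqueEdges (A j) (B j)) :
    Fintype.card V - (#D₀ + #J) ≤ gammaMax G := by
  choose X hXside hXmeet using fun j => exists_side_not_disjoint (A j) (B j) D₀
  have hXsub : ∀ j, X j ⊆ A j ∪ B j := fun j => by
    rcases hXside j with h | h <;> rw [h]
    exacts [subset_union_left, subset_union_right]
  set hit := J.filter fun j => ¬Disjoint (A j ∪ B j) D₀
  set intact := J.filter fun j => Disjoint (A j ∪ B j) D₀
  set D := D₀ ∪ hit.biUnion X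
  have hD : #D ≤ #D₀ + #hit := card_union_biUnion_le fun j hj => by
    obtain ⟨hjJ, hjD₀⟩ := mem_filter.1 hj
    refine card_sdiff_le_one_of_not_disjoint ?_ (hXmeet j hjD₀)
    rcases hXside j with h | h <;> rw [h]
    exacts [(hJ j hjJ).1, (hJ j hjJ).2.1]
  have hsplit : #intact + #hit = #J := card_filter_add_card_filter_not _
  refine le_trans (by omega) (card_sub_le_gammaMax_of_cover D intact (fun j => A j ∪ B j) ?_
    (fun i hi j hj => hJdisj i (mem_filter.1 hi).1 j (mem_filter.1 hj).1) ?_)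
  · intro j hj
    obtain ⟨hjJ, hjD₀⟩ := mem_filter.1 hj
    refine ⟨isC4_of_isInducedCompleteBipartite (hJ j hjJ).1 (hJ j hjJ).2.1 (hJ j hjJ).2.2,
      disjoint_union_right.2 ⟨hjD₀, (disjoint_biUnion_right _ _ _).2 fun i hi => ?_⟩⟩
    obtain ⟨hiJ, hiD₀⟩ := mem_filter.1 hi
    exact (hJdisj j hjJ i hiJ (by rintro rfl; exact hiD₀ hjD₀)).mono_right (hXsub i)
  · intro u v huv
    rcases hcover u v huv with hu | hv | ⟨j, hjJ, he⟩
    · exact Or.inl (mem_union_left _ hu)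
    · exact Or.inr (Or.inl (mem_union_left _ hv))
    by_cases hj : Disjoint (A j ∪ B j) D₀
    · exact Or.inr (Or.inr ⟨j, mem_filter.2 ⟨hjJ, hj⟩, ((hJ j hjJ).2.2.adj_iff.2 he).2⟩)
    · have hXD : X j ⊆ D :=
        (subset_biUnion_of_mem X (mem_filter.2 ⟨hjJ, hj⟩)).trans subset_union_right
      rcases mem_or_mem_of_mk_mem_bicliqueEdges (hXside j) he with hu | hv
      exacts [Or.inl (hXD hu), Or.inr (Or.inl (hXD hv))]

end LowerBound

section TauEq

variable {V : Type*} [Fintype V] [DecidableEq V] {G : SimpleGraph V}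

theorem IsSparseUpTo.card_sub_le_gammaMax (hG : IsSparseUpTo G 7) {m : ℕ}
    {P : Fin m → Finset V × Finset V} (hP : IsBicliqueDecomp G m P) :
    Fintype.card V - m ≤ gammaMax G := by
  obtain ⟨hbic, hdisj, hcover⟩ := hP
  set stars := univ.filter fun i => #(P i).1 = 1 ∨ #(P i).2 = 1
  set center : Fin m → Finset V := fun i => if #(P i).1 = 1 then (P i).1 else (P i).2
  have hcenter : ∀ i, center i = (P i).1 ∨ center i = (P i).2 := fun i => by
    by_cases h : #(P i).1 = 1 <;> simp [center, h]
  have hcenter_card : ∀ i ∈ stars, #(center i) ≤ 1 := fun i hi => by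
    have := (mem_filter.1 hi).2
    simp only [center]
    split_ifs <;> omega
  have hK22 : ∀ i ∈ starsᶜ, #(P i).1 = 2 ∧ #(P i).2 = 2 := fun i hi => by
    have := (hG.mono (by norm_num)).card_eq_one_or_card_eq_one_or (hbic i)
    simp only [stars, mem_compl, mem_filter, mem_univ, true_and] at hi
    tauto
  refine le_trans ?_ (card_sub_le_gammaMax_of_k22_cover (stars.biUnion center) starsᶜ
    (fun i => (P i).1) (fun i => (P i).2) ?_ ?_ ?_)
  · have := card_biUnion_le_card_mul stars center 1 hcenter_card
    have := card_add_card_compl stars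
    rw [Fintype.card_fin] at this
    omega
  · exact fun j hj => ⟨(hK22 j hj).1, (hK22 j hj).2,
      (hG.mono (by norm_num)).isInducedCompleteBipartite (hK22 j hj).1 (hK22 j hj).2 (hbic j)⟩
  · exact fun i hi j hj hij => hG.disjoint_of_disjoint_bicliqueEdges (hK22 i hi).1
      (hK22 i hi).2 (hK22 j hj).1 (hK22 j hj).2 (hbic i) (hbic j) (hdisj i j hij)
  · intro u v huv
    have he : s(u, v) ∈ G.edgeSet := huv
    rw [← hcover, Set.mem_iUnion] at he
    obtain ⟨i, hi⟩ := he
    by_cases hs : i ∈ stars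
    · rcases mem_or_mem_of_mk_mem_bicliqueEdges (hcenter i) hi with h | h
      exacts [Or.inl (mem_biUnion.2 ⟨i, hs, h⟩), Or.inr (Or.inl (mem_biUnion.2 ⟨i, hs, h⟩))]
    · exact Or.inr (Or.inr ⟨i, mem_compl.2 hs, hi⟩)

theorem IsSparseUpTo.tau_eq (hG : IsSparseUpTo G 7) :
    tau G = Fintype.card V - gammaMax G := by
  have hdec := bicliqueDecomposable_card_sub_gammaMax G
  obtain ⟨P, hP⟩ := hdec.exists_isBicliqueDecomp_tau
  have := hG.card_sub_le_gammaMax hP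
  have := hdec.tau_le
  have := gammaMax_le_card G
  omega

end TauEq

section RandomGraph

variable {n : ℕ} {p : ℝ}

theorem isProbabilityMeasure_bernoulliBool (h0 : 0 ≤ p) (h1 : p ≤ 1) :
    IsProbabilityMeasure (bernoulliBool p) := by
  have huniv : bernoulliBool p Set.univ = ENNReal.ofReal p + ENNReal.ofReal (1 - p) := by
    simp [bernoulliBool]
    rfl
  exact ⟨by rw [huniv, ← ENNReal.ofReal_add h0 (by linarith)]; simp⟩

theorem bernoulliBool_singleton_true (p : ℝ) : bernoulliBool p {true} = ENNReal.ofReal p := by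
  simp [bernoulliBool]
  rfl

theorem erdosRenyi_forall_mem_eq_true (h0 : 0 ≤ p) (h1 : p ≤ 1) (F : Finset (Sym2 (Fin n))) :
    erdosRenyi n p {ω | ∀ e ∈ F, ω e = true} = ENNReal.ofReal p ^ #F := by
  have := isProbabilityMeasure_bernoulliBool h0 h1
  have hF : {ω : Sym2 (Fin n) → Bool | ∀ e ∈ F, ω e = true} =
      (F : Set (Sym2 (Fin n))).pi fun _ => {true} := by
    ext; simp
  rw [hF, erdosRenyi, Measure.pi_pi_finset, bernoulliBool_singleton_true, prod_const]

theorem isProbabilityMeasure_erdosRenyi (h0 : 0 ≤ p) (h1 : p ≤ 1) :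
    IsProbabilityMeasure (erdosRenyi n p) := by
  have := isProbabilityMeasure_bernoulliBool h0 h1
  unfold erdosRenyi
  infer_instance

/-- Union bound: a set `W` of `w ≤ k` vertices spanning more than `w` edges contains `w + 1`
present pairs of `W.sym2`. -/
theorem erdosRenyi_not_isSparseUpTo_le (h0 : 0 ≤ p) (h1 : p ≤ 1) (k : ℕ) :
    erdosRenyi n p {ω | ¬IsSparseUpTo (graphOf n ω) k} ≤
      ∑ w ∈ range (k + 1),
        ((n.choose w * ((w + 1).choose 2).choose (w + 1) : ℕ) : ENNReal) *
          ENNReal.ofReal p ^ (w + 1) := by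
  calc erdosRenyi n p {ω | ¬IsSparseUpTo (graphOf n ω) k}
      ≤ erdosRenyi n p (⋃ w ∈ range (k + 1), ⋃ W ∈ powersetCard w (univ : Finset (Fin n)),
          ⋃ F ∈ W.sym2.powersetCard (w + 1), {ω | ∀ e ∈ F, ω e = true}) := measure_mono ?_
    _ ≤ ∑ w ∈ range (k + 1), ∑ W ∈ powersetCard w univ, ∑ F ∈ W.sym2.powersetCard (w + 1),
          erdosRenyi n p {ω | ∀ e ∈ F, ω e = true} :=
        (measure_biUnion_finset_le _ _).trans <| sum_le_sum fun w _ =>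
          (measure_biUnion_finset_le _ _).trans <| sum_le_sum fun W _ =>
            measure_biUnion_finset_le _ _
    _ = ∑ w ∈ range (k + 1), ∑ W ∈ powersetCard w univ, ∑ F ∈ W.sym2.powersetCard (w + 1),
          ENNReal.ofReal p ^ (w + 1) := by
        refine sum_congr rfl fun w _ => sum_congr rfl fun W _ => sum_congr rfl fun F hF => ?_
        rw [erdosRenyi_forall_mem_eq_true h0 h1, (mem_powersetCard.1 hF).2]
    _ = _ := by
        refine sum_congr rfl fun w _ => ?_
        rw [sum_congr rfl fun W hW => by
          rw [sum_const, card_powersetCard, card_sym2, (mem_powersetCard.1 hW).2]]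
        rw [sum_const, card_powersetCard, card_univ, Fintype.card_fin, nsmul_eq_mul, nsmul_eq_mul]
        push_cast
        ring
  intro ω hω
  simp only [IsSparseUpTo, Set.mem_ofPred_eq, not_forall, not_le] at hω
  obtain ⟨W, hWk, F, hFW, hFG, hWF⟩ := hω
  obtain ⟨F', hF'F, hF'⟩ := exists_subset_card_eq (Nat.succ_le_of_lt hWF)
  simp only [Set.mem_iUnion, mem_range, mem_powersetCard, subset_univ, true_and, exists_prop]
  refine ⟨#W, by omega, W, rfl, F', ⟨hF'F.trans hFW, hF'⟩, fun e he => ?_⟩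
  have := hFG (hF'F he)
  simp only [graphOf, edgeSet_fromEdgeSet] at this
  exact this.1

end RandomGraph

section Limit

open Topology

theorem tendsto_choose_mul_pow {p : ℕ → ℝ} (hp : ∀ n, 0 ≤ p n) {k w : ℕ} (hw : w ≤ k)
    (h : Tendsto (fun n => p n * (n : ℝ) ^ ((k : ℝ) / (k + 1))) atTop (𝓝 0)) :
    Tendsto (fun n => (n.choose w : ℝ) * p n ^ (w + 1)) atTop (𝓝 0) := by
  have hlim : Tendsto (fun n => (p n * (n : ℝ) ^ ((k : ℝ) / (k + 1))) ^ (w + 1)) atTop (𝓝 0) := by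
    simpa using h.pow (w + 1)
  refine squeeze_zero' (Eventually.of_forall fun n => by have := hp n; positivity) ?_ hlim
  filter_upwards [eventually_ge_atTop 1] with n hn
  have hn1 : (1 : ℝ) ≤ n := by exact_mod_cast hn
  have hexp : (w : ℝ) ≤ (k : ℝ) / (k + 1) * (w + 1) := by
    rw [div_mul_eq_mul_div, le_div_iff₀ (by positivity)]
    have : (w : ℝ) ≤ k := by exact_mod_cast hw
    nlinarith
  have hpow : (n : ℝ) ^ w ≤ ((n : ℝ) ^ ((k : ℝ) / (k + 1))) ^ (w + 1) := by
    rw [← Real.rpow_natCast _ (w + 1), ← Real.rpow_mul (by positivity), ← Real.rpow_natCast]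
    exact Real.rpow_le_rpow_of_exponent_le hn1 (by push_cast; exact hexp)
  have := hp n
  calc (n.choose w : ℝ) * p n ^ (w + 1) ≤ (n : ℝ) ^ w * p n ^ (w + 1) := by
        gcongr
        exact_mod_cast Nat.choose_le_pow n w
    _ ≤ ((n : ℝ) ^ ((k : ℝ) / (k + 1))) ^ (w + 1) * p n ^ (w + 1) := by gcongr
    _ = _ := by ring

theorem tendsto_erdosRenyi_not_isSparseUpTo {p : ℕ → ℝ} (hp : ∀ n, 0 ≤ p n ∧ p n ≤ 1) (k : ℕ)
    (h : Tendsto (fun n => p n * (n : ℝ) ^ ((k : ℝ) / (k + 1))) atTop (𝓝 0)) :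
    Tendsto (fun n => erdosRenyi n (p n) {ω | ¬IsSparseUpTo (graphOf n ω) k}) atTop (𝓝 0) := by
  refine tendsto_of_tendsto_of_tendsto_of_le_of_le tendsto_const_nhds ?_ (fun _ => zero_le)
    fun n => erdosRenyi_not_isSparseUpTo_le (hp n).1 (hp n).2 k
  rw [← sum_const_zero (s := range (k + 1))]
  refine tendsto_finsetSum _ fun w hw => ?_
  have hterm := (tendsto_choose_mul_pow (fun n => (hp n).1) (Nat.lt_succ_iff.1 (mem_range.1 hw))
    h).const_mul (((w + 1).choose 2).choose (w + 1) : ℝ)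
  rw [mul_zero] at hterm
  convert ENNReal.tendsto_ofReal hterm using 1
  · ext n
    rw [ENNReal.ofReal_mul (by positivity), ENNReal.ofReal_mul (by positivity),
      ENNReal.ofReal_pow (hp n).1, ENNReal.ofReal_natCast, ENNReal.ofReal_natCast]
    push_cast
    ring
  · simp

end Limit

/-- if `p·n^{7/8} → 0` then whp `τ(G(n,p)) = n - max γ(H)`. -/
theorem tau_very_sparse (p : ℕ → ℝ) (hp : ∀ n, 0 ≤ p n ∧ p n ≤ 1)
    (hsparse : Tendsto (fun n => p n * (n : ℝ) ^ ((7 : ℝ) / 8)) atTop (nhds 0)) :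
    Tendsto (fun n => erdosRenyi n (p n)
      {ω | tau (graphOf n ω) = n - gammaMax (graphOf n ω)}) atTop (nhds 1) := by
  have hbad := tendsto_erdosRenyi_not_isSparseUpTo hp 7 (by norm_num; exact hsparse)
  have hprob := fun n => isProbabilityMeasure_erdosRenyi (n := n) (hp n).1 (hp n).2
  refine tendsto_of_tendsto_of_tendsto_of_le_of_le
    (by simpa using ENNReal.Tendsto.sub tendsto_const_nhds hbad (Or.inl ENNReal.one_ne_top))
    tendsto_const_nhds (fun n => ?_) fun n => prob_le_one
  set E := {ω | tau (graphOf n ω) = n - gammaMax (graphOf n ω)}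
  have hEc : Eᶜ ⊆ {ω | ¬IsSparseUpTo (graphOf n ω) 7} := fun ω hω hG =>
    hω (by simpa [E] using hG.tau_eq)
  calc 1 - erdosRenyi n (p n) {ω | ¬IsSparseUpTo (graphOf n ω) 7}
      ≤ 1 - erdosRenyi n (p n) Eᶜ := tsub_le_tsub_left (measure_mono hEc) _
    _ ≤ erdosRenyi n (p n) E := tsub_le_iff_right.2 <| by
        simpa using measure_univ_le_add_compl (μ := erdosRenyi n (p n)) E

end RandomBipartiteDecomposition
end

section
/- There are absolute positive constants b, c and C such that for all sufficiently large n and every positive real p ≤ c satisfying np ≥ C·log₂ n, the following holds: for every integer m with pn/16 ≤ m ≤ pn/4, Σ_{d | m, 2 ≤ d ≤ √m} C(n,d)·C(n−d, m/d)·p^m ≤ 2^{−b·m·log₂(1/p)}. -/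
open MeasureTheory ProbabilityTheory Filter Real

namespace RandomBipartiteDecomposition

/-!
Write `m = d * k` with `2 ≤ d ≤ k`. Since `C(n, j) * p ^ j ≤ (n p) ^ j / j! ≤ exp (n p)`, the
`d + k` factors of `p` that pair with the two binomial coefficients cost at most
`exp (2 n p) ≤ exp (32 m)`, while `(d - 2) (k - 2) ≥ 0` leaves at least `m / 4` spare factors
of `p` once `m ≥ 8` (forced by `m ≥ n p / 16 ≥ log₂ n` for `n ≥ 2 ^ 8`). Summing over at most
`m` divisors, the bound `p ≤ exp (-264)` makes `p ^ (m / 8)` absorb `m * exp (32 m)`, leaving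
`p ^ (m / 8) = 2 ^ (-(m / 8) * log₂ (1 / p))`.
-/

lemma choose_mul_pow_le_exp (n k : ℕ) {x : ℝ} (hx : 0 ≤ x) :
    (n.choose k : ℝ) * x ^ k ≤ exp (n * x) :=
  calc (n.choose k : ℝ) * x ^ k ≤ (n : ℝ) ^ k / k.factorial * x ^ k := by
        gcongr; exact Nat.choose_le_pow_div k n
    _ = (n * x) ^ k / k.factorial := by ring
    _ ≤ exp (n * x) := pow_div_factorial_le_exp _ (by positivity) k

lemma rpow_neg_mul_logb_one_div {b p : ℝ} (hb : 0 < b) (hb1 : b ≠ 1) (hp : 0 < p) (t : ℝ) :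
    b ^ (-(t * logb b (1 / p))) = p ^ t := by
  rw [one_div, logb_inv, neg_mul_eq_mul_neg, neg_neg, mul_comm, rpow_mul hb.le,
    rpow_logb hb hb1 hp]

lemma two_mul_add_le_mul_add_four {d k : ℕ} (hd : 2 ≤ d) (hk : 2 ≤ k) :
    2 * (d + k) ≤ d * k + 4 := by
  nlinarith

lemma choose_mul_choose_mul_pow_le {n d k : ℕ} {p : ℝ} (hp : 0 < p) (hp1 : p ≤ 1)
    (hd : 2 ≤ d) (hk : 2 ≤ k) (hm : 8 ≤ d * k) :
    (n.choose d : ℝ) * (n - d).choose k * p ^ (d * k) ≤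
      exp (2 * (n * p)) * p ^ ((d * k : ℕ) / 4 : ℝ) := by
  have hspare : d + k + (d * k - (d + k)) = d * k := by
    have := two_mul_add_le_mul_add_four hd hk; omega
  have hspare_ge : ((d * k : ℕ) / 4 : ℝ) ≤ (d * k - (d + k) : ℕ) := by
    have := two_mul_add_le_mul_add_four hd hk
    rw [div_le_iff₀ (by norm_num)]; norm_cast; omega
  calc (n.choose d : ℝ) * (n - d).choose k * p ^ (d * k)
      ≤ n.choose d * n.choose k * p ^ (d * k) := by
        gcongr; exact Nat.sub_le n d
    _ = (n.choose d * p ^ d) * (n.choose k * p ^ k) * p ^ (d * k - (d + k)) := by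
        conv_lhs => rw [← hspare, pow_add, pow_add]
        ring
    _ ≤ exp (n * p) * exp (n * p) * p ^ ((d * k : ℕ) / 4 : ℝ) := by
        gcongr
        · exact choose_mul_pow_le_exp n d hp.le
        · exact choose_mul_pow_le_exp n k hp.le
        · rw [← rpow_natCast]; exact rpow_le_rpow_of_exponent_ge hp hp1 hspare_ge
    _ = exp (2 * (n * p)) * p ^ ((d * k : ℕ) / 4 : ℝ) := by rw [← exp_add, two_mul]

lemma sum_choose_mul_choose_mul_pow_le {n m : ℕ} {p : ℝ} (hp : 0 < p) (hp1 : p ≤ 1)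
    (hm : 8 ≤ m) :
    ∑ d ∈ m.divisors.filter (fun d => 2 ≤ d ∧ d ^ 2 ≤ m),
        (n.choose d : ℝ) * ((n - d).choose (m / d) : ℝ) * p ^ m ≤
      m * (exp (2 * (n * p)) * p ^ ((m : ℝ) / 4)) := by
  have hterm : ∀ d ∈ m.divisors.filter (fun d => 2 ≤ d ∧ d ^ 2 ≤ m),
      (n.choose d : ℝ) * ((n - d).choose (m / d) : ℝ) * p ^ m ≤
        exp (2 * (n * p)) * p ^ ((m : ℝ) / 4) := by
    intro d hd
    obtain ⟨⟨hdvd, -⟩, hd2, hdsq⟩ := by simpa only [Finset.mem_filter, Nat.mem_divisors] using hd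
    obtain ⟨k, rfl⟩ := hdvd
    have hdk : d ≤ k := Nat.le_of_mul_le_mul_left (by rw [← sq]; exact hdsq) (by omega)
    rw [Nat.mul_div_cancel_left k (by omega)]
    exact_mod_cast choose_mul_choose_mul_pow_le hp hp1 hd2 (hd2.trans hdk) hm
  calc _ ≤ _ := Finset.sum_le_card_nsmul _ _ _ hterm
    _ ≤ _ := by
      rw [nsmul_eq_mul]
      gcongr
      exact_mod_cast (Finset.card_filter_le _ _).trans (Nat.card_divisors_le_self m)

lemma natCast_mul_exp_mul_rpow_le {m : ℕ} {x p : ℝ} (hp : 0 < p) (hpc : p ≤ exp (-264))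
    (hx : x ≤ 16 * m) :
    m * (exp (2 * x) * p ^ ((m : ℝ) / 4)) ≤ p ^ ((m : ℝ) / 8) := by
  have hsmall : p ^ ((m : ℝ) / 8) ≤ exp (-(33 * m)) := by
    calc p ^ ((m : ℝ) / 8) ≤ exp (-264) ^ ((m : ℝ) / 8) := by gcongr
      _ = exp (-(33 * m)) := by rw [← exp_mul]; ring_nf
  have hsplit : p ^ ((m : ℝ) / 4) = p ^ ((m : ℝ) / 8) * p ^ ((m : ℝ) / 8) := by
    rw [← rpow_add hp]; ring_nf
  have hm_le : (m : ℝ) ≤ exp m := by linarith [add_one_le_exp (m : ℝ)]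
  have hx_le : exp (2 * x) ≤ exp (32 * m) := exp_le_exp.mpr (by linarith)
  calc (m : ℝ) * (exp (2 * x) * p ^ ((m : ℝ) / 4))
      ≤ exp m * (exp (32 * m) * (exp (-(33 * m)) * p ^ ((m : ℝ) / 8))) := by
        rw [hsplit]
        gcongr
    _ = p ^ ((m : ℝ) / 8) := by
        rw [← mul_assoc, ← mul_assoc, ← exp_add, ← exp_add,
          show (m : ℝ) + 32 * m + -(33 * m) = 0 by ring, exp_zero, one_mul]

/-- Lemma 3.1: for suitable absolute constants `b, c, C`, for large `n`,
`p ≤ c` with `np ≥ C log₂ n`, and `pn/16 ≤ m ≤ pn/4`,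
`Σ_{d | m, 2 ≤ d ≤ √m} C(n,d)·C(n-d,m/d)·p^m ≤ 2^{-b·m·log₂(1/p)}`. -/
theorem divisor_sum_bound :
    ∃ b c C : ℝ, 0 < b ∧ 0 < c ∧ 0 < C ∧ ∃ N : ℕ, ∀ n : ℕ, N ≤ n →
      ∀ p : ℝ, 0 < p → p ≤ c → C * Real.logb 2 n ≤ n * p →
      ∀ m : ℕ, p * n / 16 ≤ (m : ℝ) → (m : ℝ) ≤ p * n / 4 →
      ∑ d ∈ m.divisors.filter (fun d => 2 ≤ d ∧ d ^ 2 ≤ m),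
          (n.choose d : ℝ) * ((n - d).choose (m / d) : ℝ) * p ^ m ≤
        (2 : ℝ) ^ (-(b * m * Real.logb 2 (1 / p))) := by
  refine ⟨1 / 8, exp (-264), 16, by norm_num, exp_pos _, by norm_num, 2 ^ 8, ?_⟩
  intro n hn p hp hpc hlog m hm_lo _
  have hp1 : p ≤ 1 := hpc.trans (exp_le_one_iff.mpr (by norm_num))
  have hlogn : 8 ≤ logb 2 n := by
    rw [le_logb_iff_rpow_le one_lt_two (by positivity)]
    exact_mod_cast hn
  have hm8 : 8 ≤ m := by exact_mod_cast (show (8 : ℝ) ≤ m by linarith)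
  rw [rpow_neg_mul_logb_one_div two_pos (by norm_num) hp, one_div, mul_comm, ← div_eq_mul_inv]
  exact (sum_choose_mul_choose_mul_pow_le hp hp1 hm8).trans
    (natCast_mul_exp_mul_rpow_le hp hpc (by linarith))

end RandomBipartiteDecomposition
end

section
/- There are absolute positive constants a, c and C such that for all sufficiently large n and every positive real p ≤ c satisfying np ≥ C·log₂ n, the probability that G = G(n,p) satisfies τ'(G) ≤ 2n is at most 2^{−a·p·n²}. -/
open MeasureTheory ProbabilityTheory Filter Real

namespace RandomBipartiteDecomposition

/-
If `τ'(G) ≤ 2n`, then `G` is the edge-disjoint union of a family of `m ≤ 2n` nontrivial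
bicliques `(Aᵢ, Bᵢ)`, so `G` is determined by that family. With `q = p / (1 - p)`, the graph
`G(n,p)` equals a fixed graph with `k` edges with probability `(1 - p) ^ C(n,2) * q ^ k`.
Summing over all families, a single nontrivial biclique contributes at most
`∑ q ^ (|A| |B|) ≤ q⁻⁴ (1 + q²) ^ (2n)`, because `|A| |B| ≥ 2 |A| + 2 |B| - 4`. Hence the
probability is at most `(2n + 1) (1 - p) ^ C(n,2) (q⁻⁴ (1 + q²) ^ (2n)) ^ (2n)
≤ exp (-p n² / 2 + O(p² n² + n log n))`, which is below `2 ^ (-p n² / 4)` when `p` is small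
and `n p ≫ log n`.
-/

open Finset

section Bicliques

variable {V : Type*}

theorem exists_isNontrivialBicliqueDecomp_of_tau'_le {G : SimpleGraph V} {M : ℕ}
    (h : tau' G ≤ M) : ∃ m ≤ M, ∃ P, IsNontrivialBicliqueDecomp G m P := by
  obtain ⟨_, ⟨m, rfl, P, hP⟩, hlt⟩ :=
    sInf_lt_iff.mp (h.trans_lt (ENat.natCast_lt_natCast.mpr M.lt_succ_self))
  exact ⟨m, Nat.lt_succ_iff.mp (ENat.natCast_lt_natCast.mp hlt), P, hP⟩

variable [DecidableEq V]

def bicliqueFinset (A B : Finset V) : Finset (Sym2 V) :=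
  (A ×ˢ B).image fun x => s(x.1, x.2)

@[simp]
theorem coe_bicliqueFinset (A B : Finset V) :
    (bicliqueFinset A B : Set (Sym2 V)) = bicliqueEdges A B := by
  ext e
  simp only [bicliqueFinset, coe_image, coe_product, Set.mem_image, Set.mem_prod, mem_coe,
    Prod.exists, bicliqueEdges, Set.mem_ofPred_eq, and_assoc]
  exact ⟨fun ⟨a, b, ha, hb, he⟩ => ⟨a, ha, b, hb, he.symm⟩,
    fun ⟨a, ha, b, hb, he⟩ => ⟨a, b, ha, hb, he.symm⟩⟩

theorem not_isDiag_of_mem_bicliqueFinset {A B : Finset V} (hAB : Disjoint A B)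
    {e : Sym2 V} (he : e ∈ bicliqueFinset A B) : ¬e.IsDiag := by
  obtain ⟨⟨a, b⟩, hab, rfl⟩ := Finset.mem_image.mp he
  rw [Finset.mem_product] at hab
  rw [Sym2.mk_isDiag_iff]
  exact fun h => Finset.disjoint_left.mp hAB hab.1 (h ▸ hab.2)

theorem card_bicliqueFinset {A B : Finset V} (hAB : Disjoint A B) :
    #(bicliqueFinset A B) = #A * #B := by
  rw [bicliqueFinset, card_image_of_injOn, card_product]
  rintro ⟨a, b⟩ hab ⟨a', b'⟩ hab' h
  simp only [coe_product, Set.mem_prod, mem_coe] at hab hab'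
  rcases Sym2.eq_iff.mp h with ⟨rfl, rfl⟩ | ⟨rfl, rfl⟩
  · rfl
  · exact absurd hab'.2 (Finset.disjoint_left.mp hAB hab.1)

theorem IsNontrivialBicliqueDecomp.edgeSet_eq {G : SimpleGraph V} {m : ℕ}
    {P : Fin m → Finset V × Finset V} (hP : IsNontrivialBicliqueDecomp G m P) :
    G.edgeSet = ↑(univ.biUnion fun i => bicliqueFinset (P i).1 (P i).2) := by
  rw [← hP.2.2, coe_biUnion]
  simp

theorem IsNontrivialBicliqueDecomp.card_biUnion {G : SimpleGraph V} {m : ℕ}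
    {P : Fin m → Finset V × Finset V} (hP : IsNontrivialBicliqueDecomp G m P) :
    #(univ.biUnion fun i => bicliqueFinset (P i).1 (P i).2) = ∑ i, #(P i).1 * #(P i).2 := by
  rw [Finset.card_biUnion fun i _ j _ hij => ?_]
  · exact sum_congr rfl fun i _ => card_bicliqueFinset (hP.1 i).2.2.1
  · rw [Function.onFun, ← disjoint_coe, coe_bicliqueFinset, coe_bicliqueFinset]
    exact hP.2.1 i j hij

end Bicliques

section Weights

variable {V : Type*}

noncomputable def bicliqueWeight (q : ℝ) (AB : Finset V × Finset V) : ℝ :=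
  if 2 ≤ #AB.1 ∧ 2 ≤ #AB.2 then q ^ (#AB.1 * #AB.2) else 0

theorem bicliqueWeight_nonneg {q : ℝ} (hq : 0 ≤ q) (AB : Finset V × Finset V) :
    0 ≤ bicliqueWeight q AB := by
  unfold bicliqueWeight
  split_ifs <;> positivity

theorem sum_bicliqueWeight_le [Fintype V] {q : ℝ} (hq0 : 0 < q) (hq1 : q ≤ 1) :
    ∑ AB : Finset V × Finset V, bicliqueWeight q AB ≤
      (q ^ 2 + 1) ^ (2 * Fintype.card V) / q ^ 4 := by
  have hterm : ∀ AB : Finset V × Finset V,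
      bicliqueWeight q AB ≤ (q ^ 2) ^ #AB.1 * (q ^ 2) ^ #AB.2 / q ^ 4 := fun ⟨A, B⟩ => by
    unfold bicliqueWeight
    split_ifs with h
    · -- `(#A - 2) * (#B - 2) ≥ 0` gives `#A * #B + 4 ≥ 2 * #A + 2 * #B`
      rw [le_div_iff₀ (by positivity), ← pow_mul, ← pow_mul, ← pow_add, ← pow_add]
      exact pow_le_pow_of_le_one hq0.le hq1 (by nlinarith [h.1, h.2])
    · positivity
  have hsum : ∑ A : Finset V, (q ^ 2) ^ #A = (q ^ 2 + 1) ^ Fintype.card V := by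
    simpa using Fintype.sum_pow_mul_eq_add_pow V (q ^ 2) 1
  calc ∑ AB : Finset V × Finset V, bicliqueWeight q AB
      ≤ ∑ AB : Finset V × Finset V, (q ^ 2) ^ #AB.1 * (q ^ 2) ^ #AB.2 / q ^ 4 :=
        sum_le_sum fun AB _ => hterm AB
    _ = (q ^ 2 + 1) ^ (2 * Fintype.card V) / q ^ 4 := by
      rw [← sum_div, Fintype.sum_prod_type]
      dsimp only
      rw [← sum_mul_sum, hsum, two_mul, pow_add]

theorem sum_fin_pow_le {S B : ℝ} (hS : 0 ≤ S) (hSB : S ≤ B) (hB : 1 ≤ B) (M : ℕ) :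
    ∑ m : Fin (M + 1), S ^ (m : ℕ) ≤ (M + 1) * B ^ M := by
  calc ∑ m : Fin (M + 1), S ^ (m : ℕ) ≤ ∑ _m : Fin (M + 1), B ^ M :=
        sum_le_sum fun m _ => (pow_le_pow_left₀ hS hSB m).trans
          (pow_le_pow_right₀ hB (Nat.lt_succ_iff.mp m.isLt))
    _ = (M + 1) * B ^ M := by simp

theorem sum_fin_pow_sum_bicliqueWeight_le [Fintype V] {q : ℝ} (hq0 : 0 < q)
    (hq1 : q ≤ 1) (M : ℕ) :
    ∑ m : Fin (M + 1), (∑ AB : Finset V × Finset V, bicliqueWeight q AB) ^ (m : ℕ) ≤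
      (M + 1) * ((q ^ 2 + 1) ^ (2 * Fintype.card V) / q ^ 4) ^ M := by
  refine sum_fin_pow_le (sum_nonneg fun AB _ => bicliqueWeight_nonneg hq0.le AB)
    (sum_bicliqueWeight_le hq0 hq1) ?_ M
  rw [one_le_div (by positivity)]
  calc q ^ 4 ≤ 1 := pow_le_one₀ hq0.le hq1
    _ ≤ (q ^ 2 + 1) ^ (2 * Fintype.card V) := one_le_pow₀ (by nlinarith)

end Weights

section ErdosRenyi

variable {n : ℕ} {p : ℝ}

theorem bernoulliBool_singleton (p : ℝ) (b : Bool) :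
    bernoulliBool p {b} = ENNReal.ofReal (if b then p else 1 - p) := by
  cases b <;> simp [bernoulliBool, ENNReal.ofReal]

theorem bernoulliBool_univ (hp0 : 0 ≤ p) (hp1 : p ≤ 1) : bernoulliBool p Set.univ = 1 := by
  simp only [bernoulliBool, Measure.coe_add, Measure.coe_smul, Pi.add_apply, Pi.smul_apply,
    measure_univ, ENNReal.smul_def, smul_eq_mul, mul_one]
  rw [← ENNReal.coe_add, ← Real.toNNReal_add hp0 (sub_nonneg.2 hp1)]
  simp

theorem card_not_isDiag : #{e : Sym2 (Fin n) | ¬e.IsDiag} = n.choose 2 := by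
  simpa [Fintype.card_subtype] using Sym2.card_subtype_not_diag (α := Fin n)

theorem edgeSet_graphOf_eq_iff {U : Finset (Sym2 (Fin n))} (hU : ∀ e ∈ U, ¬e.IsDiag)
    (ω : Sym2 (Fin n) → Bool) :
    (graphOf n ω).edgeSet = U ↔ ∀ e, ¬e.IsDiag → ω e = decide (e ∈ U) := by
  simp only [graphOf, SimpleGraph.edgeSet_fromEdgeSet, Set.ext_iff, Set.mem_sdiff,
    Set.mem_ofPred_eq, Sym2.mem_diagSet, mem_coe]
  refine forall_congr' fun e => ?_
  by_cases he : e.IsDiag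
  · simpa [he] using fun h => hU e h he
  · cases ω e <;> simp [he]

theorem erdosRenyi_edgeSet_eq (hp0 : 0 ≤ p) (hp1 : p ≤ 1) (U : Finset (Sym2 (Fin n)))
    (hU : ∀ e ∈ U, ¬e.IsDiag) :
    erdosRenyi n p {ω | (graphOf n ω).edgeSet = U} =
      ENNReal.ofReal (p ^ #U * (1 - p) ^ (n.choose 2 - #U)) := by
  -- the flips on diagonal pairs `s(v, v)` do not affect `graphOf`
  have hevent : {ω | (graphOf n ω).edgeSet = U} =
      Set.univ.pi fun e => if e.IsDiag then Set.univ else {decide (e ∈ U)} := by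
    ext ω
    simp only [Set.mem_ofPred_eq, edgeSet_graphOf_eq_iff hU, Set.mem_pi, Set.mem_univ,
      true_imp_iff]
    refine forall_congr' fun e => ?_
    split_ifs <;> simp [*]
  have hUD : U ⊆ ({e | ¬e.IsDiag} : Finset (Sym2 (Fin n))) := fun e he =>
    mem_filter.mpr ⟨mem_univ e, hU e he⟩
  rw [hevent, erdosRenyi, Measure.pi_pi]
  simp only [apply_ite (bernoulliBool p), bernoulliBool_univ hp0 hp1, bernoulliBool_singleton,
    decide_eq_true_eq, prod_ite, prod_const_one, one_mul]
  rw [← ENNReal.ofReal_prod_of_nonneg fun e _ => by split_ifs <;> linarith, prod_ite,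
    filter_mem_eq_inter, inter_eq_right.mpr hUD, filter_notMem_eq_sdiff, prod_const, prod_const,
    card_sdiff_of_subset hUD, card_not_isDiag]

theorem pow_mul_one_sub_pow_eq (hp : p < 1) {k N : ℕ} (hk : k ≤ N) :
    p ^ k * (1 - p) ^ (N - k) = (1 - p) ^ N * (p / (1 - p)) ^ k := by
  have : 1 - p ≠ 0 := by linarith
  rw [pow_sub₀ _ this hk, div_pow]
  field_simp

theorem erdosRenyi_isNontrivialBicliqueDecomp_le (hp0 : 0 ≤ p) (hp1 : p < 1) {m : ℕ}
    (P : Fin m → Finset (Fin n) × Finset (Fin n)) :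
    erdosRenyi n p {ω | IsNontrivialBicliqueDecomp (graphOf n ω) m P} ≤
      ENNReal.ofReal ((1 - p) ^ n.choose 2 * ∏ i, bicliqueWeight (p / (1 - p)) (P i)) := by
  rcases Set.eq_empty_or_nonempty {ω | IsNontrivialBicliqueDecomp (graphOf n ω) m P} with
    h | ⟨ω₀, hω₀⟩
  · simp [h]
  set U := univ.biUnion fun i => bicliqueFinset (P i).1 (P i).2
  have hU : ∀ e ∈ U, ¬e.IsDiag := fun e he => by
    obtain ⟨i, -, hi⟩ := mem_biUnion.mp he
    exact not_isDiag_of_mem_bicliqueFinset (hω₀.1 i).2.2.1 hi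
  have hUN : #U ≤ n.choose 2 :=
    card_not_isDiag (n := n) ▸ card_le_card fun e he => mem_filter.mpr ⟨mem_univ e, hU e he⟩
  have hweight : ∏ i, bicliqueWeight (p / (1 - p)) (P i) = (p / (1 - p)) ^ #U := by
    rw [hω₀.card_biUnion, ← prod_pow_eq_pow_sum]
    exact prod_congr rfl fun i _ => if_pos ⟨(hω₀.1 i).1, (hω₀.1 i).2.1⟩
  calc erdosRenyi n p {ω | IsNontrivialBicliqueDecomp (graphOf n ω) m P}
      ≤ erdosRenyi n p {ω | (graphOf n ω).edgeSet = U} :=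
        measure_mono fun _ hω => IsNontrivialBicliqueDecomp.edgeSet_eq hω
    _ = _ := by
      rw [erdosRenyi_edgeSet_eq hp0 hp1.le U hU, hweight, pow_mul_one_sub_pow_eq hp1 hUN]

theorem erdosRenyi_tau'_le_le (hp0 : 0 ≤ p) (hp1 : p < 1) (M : ℕ) :
    erdosRenyi n p {ω | tau' (graphOf n ω) ≤ M} ≤
      ENNReal.ofReal ((1 - p) ^ n.choose 2 * ∑ m : Fin (M + 1),
        (∑ AB : Finset (Fin n) × Finset (Fin n),
          bicliqueWeight (p / (1 - p)) AB) ^ (m : ℕ)) := by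
  have hq : 0 ≤ p / (1 - p) := div_nonneg hp0 (by linarith)
  have hcover : {ω | tau' (graphOf n ω) ≤ M} ⊆
      ⋃ (m : Fin (M + 1)) (P : Fin m → Finset (Fin n) × Finset (Fin n)),
        {ω | IsNontrivialBicliqueDecomp (graphOf n ω) m P} := fun ω hω => by
    obtain ⟨m, hm, P, hP⟩ := exists_isNontrivialBicliqueDecomp_of_tau'_le hω
    exact Set.mem_iUnion₂.mpr ⟨⟨m, Nat.lt_succ_of_le hm⟩, P, hP⟩
  calc erdosRenyi n p {ω | tau' (graphOf n ω) ≤ M}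
      ≤ ∑ m : Fin (M + 1), ∑ P : Fin m → Finset (Fin n) × Finset (Fin n),
          ENNReal.ofReal ((1 - p) ^ n.choose 2 * ∏ i, bicliqueWeight (p / (1 - p)) (P i)) := by
        refine (measure_mono hcover).trans <| (measure_iUnion_fintype_le _ _).trans <|
          sum_le_sum fun m _ => (measure_iUnion_fintype_le _ _).trans <|
          sum_le_sum fun P _ => erdosRenyi_isNontrivialBicliqueDecomp_le hp0 hp1 P
    _ = _ := by
      have hnonneg : ∀ {m : ℕ} (P : Fin m → Finset (Fin n) × Finset (Fin n)),
          0 ≤ (1 - p) ^ n.choose 2 * ∏ i, bicliqueWeight (p / (1 - p)) (P i) := fun P =>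
        mul_nonneg (pow_nonneg (by linarith) _)
          (prod_nonneg fun i _ => bicliqueWeight_nonneg hq (P i))
      simp_rw [Fintype.sum_pow, mul_sum]
      rw [ENNReal.ofReal_sum_of_nonneg fun m _ => sum_nonneg fun P _ => hnonneg P]
      exact sum_congr rfl fun m _ => (ENNReal.ofReal_sum_of_nonneg fun P _ => hnonneg P).symm

end ErdosRenyi

theorem pow_le_exp_nat_mul {a x : ℝ} (ha : 0 ≤ a) (hax : a ≤ exp x) (k : ℕ) :
    a ^ k ≤ exp (k * x) := by
  rw [exp_nat_mul]
  exact pow_le_pow_left₀ ha hax k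

theorem exp_neg_le_two_rpow_neg {x : ℝ} (hx : 0 ≤ x) : exp (-x) ≤ (2 : ℝ) ^ (-x) := by
  rw [rpow_def_of_pos two_pos, exp_le_exp]
  nlinarith [log_two_lt_d9]

theorem log_le_logb_two {x : ℝ} (hx : 1 ≤ x) : log x ≤ logb 2 x :=
  le_div_self (log_nonneg hx) (log_pos one_lt_two) (log_two_lt_d9.le.trans (by norm_num))

theorem union_bound_le_exp {n : ℕ} {p : ℝ} (hn : 100 ≤ n) (hp0 : 0 < p) (hp : p ≤ 1 / 1024)
    (hlog : 1024 * log n ≤ n * p) :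
    (1 - p) ^ n.choose 2 * ((2 * n + 1) *
      (((p / (1 - p)) ^ 2 + 1) ^ (2 * n) / (p / (1 - p)) ^ 4) ^ (2 * n)) ≤
      exp (-(1 / 4 * p * n ^ 2)) := by
  set q := p / (1 - p)
  have hn' : (100 : ℝ) ≤ n := by exact_mod_cast hn
  have hn0 : (0 : ℝ) < n := by positivity
  have hlog2 : log 2 ≤ log n := log_le_log two_pos (by exact_mod_cast (by omega : 2 ≤ n))
  have hlog0 : 0 < log n := (log_pos one_lt_two).trans_le hlog2
  have hq0 : 0 < q := div_pos hp0 (by linarith)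
  have hpq : p ≤ q := le_div_self hp0.le (by linarith) (by linarith)
  have hq2p : q ≤ 2 * p := (div_le_iff₀ (by linarith)).mpr (by nlinarith)
  have hqn : q⁻¹ ≤ n := by
    rw [inv_le_iff_one_le_mul₀ hq0]
    -- `n p ≥ 1024 log n ≥ 1024 log 2 > 1`
    nlinarith [log_two_gt_d9]
  have hcount : 2 * (n : ℝ) + 1 ≤ exp (2 * log n) := by
    rw [show (2 : ℝ) * log n = (2 : ℕ) * log n by norm_num, exp_nat_mul, exp_log hn0]
    nlinarith
  have hempty : (1 - p) ^ n.choose 2 ≤ exp (n.choose 2 * (-p)) :=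
    pow_le_exp_nat_mul (by linarith) (one_sub_le_exp_neg p) _
  have hweight : ((q ^ 2 + 1) ^ (2 * n) / q ^ 4) ^ (2 * n) ≤
      exp ((2 * n : ℕ) * ((2 * n : ℕ) * q ^ 2 + (4 : ℕ) * log n)) := by
    refine pow_le_exp_nat_mul (by positivity) ?_ _
    rw [div_eq_mul_inv, ← inv_pow, exp_add]
    gcongr
    · exact pow_le_exp_nat_mul (by positivity) (by linarith [add_one_le_exp (q ^ 2)]) _
    · exact pow_le_exp_nat_mul (by positivity) (by rwa [exp_log hn0]) _
  calc (1 - p) ^ n.choose 2 * ((2 * n + 1) * ((q ^ 2 + 1) ^ (2 * n) / q ^ 4) ^ (2 * n))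
      ≤ exp (n.choose 2 * (-p)) * (exp (2 * log n) *
          exp ((2 * n : ℕ) * ((2 * n : ℕ) * q ^ 2 + (4 : ℕ) * log n))) := by gcongr
    _ = exp (n.choose 2 * (-p) + 2 * log n +
          (2 * n : ℕ) * ((2 * n : ℕ) * q ^ 2 + (4 : ℕ) * log n)) := by
      rw [exp_add, exp_add, mul_assoc]
    _ ≤ exp (-(1 / 4 * p * n ^ 2)) := by
      rw [exp_le_exp, Nat.cast_choose_two]
      push_cast
      have hnlog : n * log n ≤ p * n ^ 2 / 1024 := by nlinarith
      have hq2 : q ^ 2 * n ^ 2 ≤ p * n ^ 2 / 256 := by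
        have : q ^ 2 ≤ p / 256 := by nlinarith
        exact (mul_le_mul_of_nonneg_right this (sq_nonneg _)).trans_eq (by ring)
      have hpn : p * n ≤ p * n ^ 2 / 100 := by nlinarith
      nlinarith

/-- Corollary 3.3: for suitable absolute constants `a, c, C`, for large `n`
and `p ≤ c` with `np ≥ C log₂ n`, `P(τ'(G(n,p)) ≤ 2n) ≤ 2^{-a·p·n²}`. -/
theorem tau'_le_two_n_unlikely :
    ∃ a c C : ℝ, 0 < a ∧ 0 < c ∧ 0 < C ∧ ∃ N : ℕ, ∀ n : ℕ, N ≤ n →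
      ∀ p : ℝ, 0 < p → p ≤ c → C * Real.logb 2 n ≤ n * p →
      erdosRenyi n p {ω | tau' (graphOf n ω) ≤ ((2 * n : ℕ) : ℕ∞)} ≤
        ENNReal.ofReal ((2 : ℝ) ^ (-(a * p * n ^ 2))) := by
  refine ⟨1 / 4, 1 / 1024, 1024, by norm_num, by norm_num, by norm_num, 100,
    fun n hn p hp0 hpc hC => ?_⟩
  have hp1 : p < 1 := by linarith
  have hq0 : 0 < p / (1 - p) := div_pos hp0 (by linarith)
  have hq1 : p / (1 - p) ≤ 1 := (div_le_one (by linarith)).mpr (by linarith)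
  have hlog : 1024 * log n ≤ n * p :=
    le_trans (by gcongr; exact log_le_logb_two (by exact_mod_cast (by omega : 1 ≤ n))) hC
  calc erdosRenyi n p {ω | tau' (graphOf n ω) ≤ ((2 * n : ℕ) : ℕ∞)}
      ≤ ENNReal.ofReal ((1 - p) ^ n.choose 2 * ∑ m : Fin (2 * n + 1),
          (∑ AB : Finset (Fin n) × Finset (Fin n),
            bicliqueWeight (p / (1 - p)) AB) ^ (m : ℕ)) :=
        erdosRenyi_tau'_le_le hp0.le hp1 (2 * n)
    _ ≤ ENNReal.ofReal (exp (-(1 / 4 * p * n ^ 2))) := by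
      refine ENNReal.ofReal_le_ofReal (le_trans ?_ (union_bound_le_exp hn hp0 hpc hlog))
      gcongr
      simpa using sum_fin_pow_sum_bicliqueWeight_le (V := Fin n) hq0 hq1 (2 * n)
    _ ≤ ENNReal.ofReal ((2 : ℝ) ^ (-(1 / 4 * p * n ^ 2))) :=
      ENNReal.ofReal_le_ofReal (exp_neg_le_two_rpow_neg (by positivity))

end RandomBipartiteDecomposition
end
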